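/- arXiv:0912.2152 — 8 statements merged into one kernel-verified Lean document; each statement's English description precedes it below -/
import Mathlib

section
/- Let k be a field, d an even integer and m an integer with 2 ≤ d < m−1, and set a = (d+2)/2. Then the Stanley–Reisner ideal of Δ(d,m) in k[x_1,…,x_m] equals I_{a,1,m−1} + I_{a,2,m}; equivalently, k[Δ(d,m)] is isomorphic as a k-algebra to k[x_1,…,x_m]/(I_{a,1,m−1} + I_{a,2,m}). -/
/-- The variable `x_t` (1-indexed, for `1 ≤ t ≤ n`) of the polynomial ring
`k[x_1, …, x_n]`, realized as `MvPolynomial (Fin n) k`. -/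
noncomputable def Xv (k : Type*) [Field k] (n t : ℕ) : MvPolynomial (Fin n) k :=
  if h : 1 ≤ t ∧ t ≤ n then MvPolynomial.X ⟨t - 1, by omega⟩ else 0

/-- The ideal `I_{a,p,q}` of `k[x_1, …, x_n]`, generated by the squarefree monomials
`x_{t_1} ⋯ x_{t_a}` with `p ≤ t_1 < t_2 < ⋯ < t_a ≤ q` and `t_{j+1} ≥ t_j + 2`. -/
noncomputable def idealI (k : Type*) [Field k] (n a p q : ℕ) :
    Ideal (MvPolynomial (Fin n) k) :=
  Ideal.span { f | ∃ t : ℕ → ℕ, p ≤ t 0 ∧ t (a - 1) ≤ q ∧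
    (∀ j, j + 1 < a → t j + 2 ≤ t (j + 1)) ∧
    f = ∏ j ∈ Finset.range a, Xv k n (t j) }

/-- The number of odd contiguous subsets of `W ⊆ {1, …, m}`: a contiguous subset of `W` is a
set `{i, i+1, …, j} ⊆ W` with `2 ≤ i ≤ j ≤ m−1`, `i−1 ∉ W`, `j+1 ∉ W`; it is odd contiguous
if its cardinality `j − i + 1` is odd. -/
def oddContig (m : ℕ) (W : Finset ℕ) : ℕ :=
  ((Finset.Icc 2 (m - 1) ×ˢ Finset.Icc 2 (m - 1)).filter
    (fun p : ℕ × ℕ => p.1 ≤ p.2 ∧ Finset.Icc p.1 p.2 ⊆ W ∧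
      p.1 - 1 ∉ W ∧ p.2 + 1 ∉ W ∧ Odd (p.2 - p.1 + 1))).card

/-- Gale evenness criterion: `W ⊆ {1, …, m}` is a face of the boundary complex `Δ(d,m)` of the
`d`-dimensional cyclic polytope with `m` vertices iff `#W ≤ d` and the number of odd
contiguous subsets of `W` is at most `d − #W`. -/
def isFace (d m : ℕ) (W : Finset ℕ) : Prop :=
  W ⊆ Finset.Icc 1 m ∧ W.card ≤ d ∧ oddContig m W ≤ d - W.card

/-- The Stanley–Reisner ideal of `Δ(d,m)` in `k[x_1, …, x_m]`, generated by the squarefree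
monomials `∏_{i ∈ W} x_i` over the non-faces `W ⊆ {1, …, m}`. -/
noncomputable def SRideal (k : Type*) [Field k] (d m : ℕ) :
    Ideal (MvPolynomial (Fin m) k) :=
  Ideal.span { f | ∃ W : Finset ℕ, W ⊆ Finset.Icc 1 m ∧ ¬ isFace d m W ∧
    f = ∏ i ∈ W, Xv k m i }

/-!
A generator of `I_{a,1,m-1} + I_{a,2,m}` is the monomial of a sparse set `T` (no two consecutive
indices) of size `a` avoiding `m` or `1`. Each point of `T` in `[2, m - 1]` is an odd contiguous
subset by itself, so `#T + oddContig m T ≥ 2a - 1 = d + 1` and `T` is not a face.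

Conversely, a non-face `W` has `#W + oddContig m W ≥ d + 1 = 2a - 1`. Keeping every second
element of each run of `W`, counted from the right end of the run, gives a sparse subset of size
`(#W + #(odd runs)) / 2`. It contains `1` only if the first run starts at `1` and is odd; if the
last run ends at `m` and is odd as well, neither of these two runs is counted by `oddContig`, which
leaves room to drop `1`. If instead the last run is even (or `m ∉ W`), then the first run of the
mirror image `i ↦ m + 1 - i` of `W` is even, so its sparse subset avoids `1`. Either way `W`
contains a sparse `T` of size `a` avoiding `1` or `m`, and the monomial of `T` divides that of `W`.
-/

open Finset

def IsSparse (T : Finset ℕ) : Prop := ∀ x ∈ T, x + 1 ∉ T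

theorem IsSparse.add_two_le {T : Finset ℕ} (hT : IsSparse T) {x y : ℕ} (hx : x ∈ T)
    (hy : y ∈ T) (hxy : x < y) : x + 2 ≤ y := by
  by_contra h
  exact hT x hx (by rwa [show x + 1 = y by omega])

theorem IsSparse.mono {S T : Finset ℕ} (hT : IsSparse T) (h : S ⊆ T) : IsSparse S :=
  fun x hx hx1 => hT x (h hx) (h hx1)

theorem exists_sparse_of_gapped {M : Type*} [CommMonoid M] (f : ℕ → M) {a p q : ℕ}
    {t : ℕ → ℕ} (hp : p ≤ t 0) (hq : t (a - 1) ≤ q)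
    (hgap : ∀ j, j + 1 < a → t j + 2 ≤ t (j + 1)) :
    ∃ T ⊆ Icc p q, IsSparse T ∧ #T = a ∧ ∏ j ∈ range a, f (t j) = ∏ i ∈ T, f i := by
  have hlt : ∀ i j, i < j → j < a → t i + 2 ≤ t j := by
    intro i j hij hja
    induction j, hij using Nat.le_induction with
    | base => exact hgap i hja
    | succ j hij ih => have := hgap j hja; have := ih (by omega); omega
  have hmono : StrictMonoOn t (range a) := fun i _ j hj hij => by
    have := hlt i j hij (mem_range.1 hj); omega
  refine ⟨(range a).image t, ?_, ?_, (card_image_of_injOn hmono.injOn).trans (card_range a),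
    (prod_image hmono.injOn).symm⟩
  · simp only [subset_iff, mem_image, mem_range, mem_Icc]
    rintro _ ⟨j, hj, rfl⟩
    constructor
    · rcases j.eq_zero_or_pos with rfl | hj0
      · exact hp
      · have := hlt 0 j hj0 hj; omega
    · rcases (show j ≤ a - 1 by omega).eq_or_lt with rfl | hj'
      · exact hq
      · have := hlt j (a - 1) hj' (by omega); omega
  · rintro _ hx hx1
    simp only [mem_image, mem_range] at hx hx1
    obtain ⟨i, hi, rfl⟩ := hx
    obtain ⟨j, hj, hji⟩ := hx1
    rcases lt_trichotomy i j with hij | rfl | hij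
    · have := hlt i j hij hj; omega
    · omega
    · have := hlt j i hij hi; omega

section Generators

variable {k : Type*} [Field k] {n a p q : ℕ}

theorem prod_mem_idealI {T : Finset ℕ} (ha : 0 < a) (hTpq : T ⊆ Icc p q) (hT : IsSparse T)
    (hcard : #T = a) : ∏ i ∈ T, Xv k n i ∈ idealI k n a p q := by
  set e := T.orderEmbOfFin hcard
  let t : ℕ → ℕ := fun j => if h : j < a then e ⟨j, h⟩ else 0
  have ht : ∀ j (h : j < a), t j = e ⟨j, h⟩ := fun j h => dif_pos h
  have hmem : ∀ j (h : j < a), t j ∈ T := fun j h => ht j h ▸ T.orderEmbOfFin_mem hcard _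
  refine Ideal.subset_span ⟨t, (mem_Icc.1 (hTpq (hmem 0 ha))).1,
    (mem_Icc.1 (hTpq (hmem _ (by omega)))).2, fun j hj => ?_, ?_⟩
  · refine hT.add_two_le (hmem j (by omega)) (hmem _ hj) ?_
    rw [ht j (by omega), ht _ hj]
    exact e.strictMono (Fin.mk_lt_mk.2 j.lt_succ_self)
  · rw [← Fin.prod_univ_eq_prod_range, ← T.map_orderEmbOfFin_univ hcard, prod_map]
    exact Fintype.prod_congr _ _ fun j => by simp [ht j j.2, e]

theorem idealI_eq_span_sparse (ha : 0 < a) :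
    idealI k n a p q =
      Ideal.span {f | ∃ T ⊆ Icc p q, IsSparse T ∧ #T = a ∧ f = ∏ i ∈ T, Xv k n i} := by
  apply le_antisymm <;> rw [idealI, Ideal.span_le]
  · rintro _ ⟨t, hp, hq, hgap, rfl⟩
    obtain ⟨T, hTpq, hT, hcard, heq⟩ := exists_sparse_of_gapped (Xv k n) hp hq hgap
    exact Ideal.subset_span ⟨T, hTpq, hT, hcard, heq⟩
  · rintro _ ⟨T, hTpq, hT, hcard, rfl⟩
    exact prod_mem_idealI ha hTpq hT hcard

end Generators

noncomputable def runEnd (W : Finset ℕ) (i : ℕ) : ℕ := sInf {j | i ≤ j ∧ j + 1 ∉ W}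

section Runs

variable {W : Finset ℕ} {i j : ℕ}

theorem runEnd_spec (W : Finset ℕ) (i : ℕ) : i ≤ runEnd W i ∧ runEnd W i + 1 ∉ W := by
  refine Nat.sInf_mem (s := {j | i ≤ j ∧ j + 1 ∉ W})
    ⟨max i (W.sup id), le_max_left _ _, fun h => ?_⟩
  have : max i (W.sup id) + 1 ≤ W.sup id := le_sup (f := id) h
  omega

theorem Icc_succ_runEnd_subset (W : Finset ℕ) (i : ℕ) : Icc (i + 1) (runEnd W i) ⊆ W := by
  intro x hx
  rw [mem_Icc] at hx
  by_contra hxW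
  have : runEnd W i ≤ x - 1 := Nat.sInf_le (show x - 1 ∈ {j | i ≤ j ∧ j + 1 ∉ W} from
    ⟨by omega, by rwa [Nat.sub_add_cancel (by omega)]⟩)
  omega

theorem runEnd_eq (hij : i ≤ j) (hsub : Icc (i + 1) j ⊆ W) (hj : j + 1 ∉ W) :
    runEnd W i = j := by
  have hle : runEnd W i ≤ j := Nat.sInf_le ⟨hij, hj⟩
  by_contra hne
  obtain ⟨hi, he⟩ := runEnd_spec W i
  exact he (hsub (mem_Icc.2 ⟨by omega, by omega⟩))

theorem runEnd_succ (h : i + 1 ∈ W) : runEnd W (i + 1) = runEnd W i := by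
  obtain ⟨hi, he⟩ := runEnd_spec W (i + 1)
  refine (runEnd_eq (by omega) (fun x hx => ?_) he).symm
  rcases (mem_Icc.1 hx).1.eq_or_lt with rfl | hlt
  · exact h
  · exact Icc_succ_runEnd_subset W (i + 1) (mem_Icc.2 ⟨hlt, (mem_Icc.1 hx).2⟩)

end Runs

noncomputable def evenFromEnd (W : Finset ℕ) : Finset ℕ :=
  W.filter fun x => Even (runEnd W x - x)

noncomputable def oddRunStarts (W : Finset ℕ) : Finset ℕ :=
  (evenFromEnd W).filter fun x => x - 1 ∉ W

theorem isSparse_evenFromEnd (W : Finset ℕ) : IsSparse (evenFromEnd W) := by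
  intro x hx hx1
  simp only [evenFromEnd, mem_filter] at hx hx1
  have := (runEnd_spec W (x + 1)).1
  rw [runEnd_succ hx1.1] at hx1 this
  obtain ⟨⟨r, hr⟩, ⟨s, hs⟩⟩ := And.intro hx.2 hx1.2
  omega

theorem card_add_card_oddRunStarts_le (W : Finset ℕ) :
    #W + #(oddRunStarts W) ≤ 2 * #(evenFromEnd W) := by
  -- `x ↦ x + 1` injects the dropped elements into the kept ones that do not start a run
  have hsucc : #(W \ evenFromEnd W) ≤ #(evenFromEnd W \ oddRunStarts W) := by
    refine card_le_card_of_injOn (· + 1) (fun x hx => ?_) (fun x _ y _ h => by simpa using h)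
    simp only [coe_sdiff, Set.mem_sdiff, mem_coe, evenFromEnd, oddRunStarts, mem_filter,
      not_and, not_not] at hx ⊢
    obtain ⟨hxW, hodd⟩ := hx
    have hodd := Nat.not_even_iff_odd.1 (hodd hxW)
    have hlt : x < runEnd W x := by
      rcases (runEnd_spec W x).1.eq_or_lt with h | h
      · rw [← h, Nat.sub_self] at hodd; exact absurd hodd (by decide)
      · exact h
    have hx1 : x + 1 ∈ W := Icc_succ_runEnd_subset W x (mem_Icc.2 ⟨le_rfl, hlt⟩)
    rw [runEnd_succ hx1]
    obtain ⟨r, hr⟩ := hodd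
    exact ⟨⟨hx1, ⟨r, by omega⟩⟩, fun _ => by simpa using hxW⟩
  have h1 : #(W \ evenFromEnd W) + #(evenFromEnd W) = #W :=
    card_sdiff_add_card_eq_card (filter_subset _ _)
  have h2 : #(evenFromEnd W \ oddRunStarts W) + #(oddRunStarts W) = #(evenFromEnd W) :=
    card_sdiff_add_card_eq_card (filter_subset _ _)
  omega

theorem oddContig_le_card_oddRunStarts (m : ℕ) (W : Finset ℕ) :
    oddContig m W ≤ #((oddRunStarts W).filter fun i => 2 ≤ i ∧ runEnd W i < m) := by
  have hend : ∀ {i j}, i ≤ j → Icc i j ⊆ W → j + 1 ∉ W → runEnd W i = j :=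
    fun hij hsub hj => runEnd_eq hij ((Icc_subset_Icc_left (by omega)).trans hsub) hj
  refine card_le_card_of_injOn Prod.fst (fun p hp => ?_) (fun p hp q hq h => ?_) <;>
    simp only [coe_filter, Set.mem_ofPred_eq, mem_product, mem_Icc] at *
  · obtain ⟨⟨⟨hi2, -⟩, -, hjm⟩, hij, hsub, hi1, hj1, r, hr⟩ := hp
    simp only [oddRunStarts, evenFromEnd, mem_filter, hend hij hsub hj1]
    exact ⟨⟨⟨hsub (mem_Icc.2 ⟨le_rfl, hij⟩), r, by omega⟩, hi1⟩, hi2, by omega⟩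
  · obtain ⟨-, hpij, hpsub, -, hpj1, -⟩ := hp
    obtain ⟨-, hqij, hqsub, -, hqj1, -⟩ := hq
    exact Prod.ext h (by rw [← hend hpij hpsub hpj1, ← hend hqij hqsub hqj1, h])

def reflect (m : ℕ) (W : Finset ℕ) : Finset ℕ := W.image (m + 1 - ·)

section Reflect

variable {m : ℕ} {W : Finset ℕ}

theorem mem_reflect (hW : W ⊆ Icc 1 m) {x : ℕ} :
    x ∈ reflect m W ↔ x ∈ Icc 1 m ∧ m + 1 - x ∈ W := by
  simp only [reflect, mem_image, mem_Icc]
  constructor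
  · rintro ⟨w, hw, rfl⟩
    have := mem_Icc.1 (hW hw)
    exact ⟨by omega, by rwa [show m + 1 - (m + 1 - w) = w by omega]⟩
  · rintro ⟨hx, hxW⟩
    exact ⟨_, hxW, by omega⟩

theorem reflect_subset_Icc (hW : W ⊆ Icc 1 m) : reflect m W ⊆ Icc 1 m :=
  fun _ hx => ((mem_reflect hW).1 hx).1

theorem reflect_reflect (hW : W ⊆ Icc 1 m) : reflect m (reflect m W) = W := by
  ext x
  rw [mem_reflect (reflect_subset_Icc hW), mem_reflect hW, mem_Icc, mem_Icc]
  constructor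
  · rintro ⟨hx, -, hxW⟩
    rwa [show m + 1 - (m + 1 - x) = x by omega] at hxW
  · intro hxW
    have := mem_Icc.1 (hW hxW)
    exact ⟨this, by omega, by rwa [show m + 1 - (m + 1 - x) = x by omega]⟩

theorem card_reflect (hW : W ⊆ Icc 1 m) : #(reflect m W) = #W :=
  card_image_of_injOn fun x hx y hy h => by
    have := mem_Icc.1 (hW hx); have := mem_Icc.1 (hW hy); omega

theorem IsSparse.reflect (hs : IsSparse W) (hW : W ⊆ Icc 1 m) : IsSparse (reflect m W) := by
  intro x hx hx1
  rw [mem_reflect hW] at hx hx1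
  have := mem_Icc.1 hx.1
  exact hs _ hx1.2 (by rw [show m + 1 - (x + 1) + 1 = m + 1 - x by omega]; exact hx.2)

theorem oddContig_le_oddContig_reflect (hW : W ⊆ Icc 1 m) :
    oddContig m W ≤ oddContig m (reflect m W) := by
  refine card_le_card_of_injOn (fun p => (m + 1 - p.2, m + 1 - p.1)) (fun p hp => ?_)
    (fun p hp q hq h => ?_) <;>
    simp only [coe_filter, Set.mem_ofPred_eq, mem_product, mem_Icc, Prod.ext_iff] at *
  · obtain ⟨⟨⟨hi2, him⟩, hj2, hjm⟩, hij, hsub, hi1, hj1, r, hr⟩ := hp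
    refine ⟨⟨⟨by omega, by omega⟩, by omega, by omega⟩, by omega, fun x hx => ?_,
      fun h => ?_, fun h => ?_, ⟨r, by omega⟩⟩
    · have := mem_Icc.1 hx
      exact (mem_reflect hW).2
        ⟨mem_Icc.2 ⟨by omega, by omega⟩, hsub (mem_Icc.2 ⟨by omega, by omega⟩)⟩
    · exact hj1 (by simpa [show m + 1 - (m + 1 - p.2 - 1) = p.2 + 1 by omega] using
        ((mem_reflect hW).1 h).2)
    · exact hi1 (by simpa [show m + 1 - (m + 1 - p.1 + 1) = p.1 - 1 by omega] using
        ((mem_reflect hW).1 h).2)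
  · omega

end Reflect

theorem exists_sparse_of_evenFromEnd {m a : ℕ} {W : Finset ℕ} (hW : W ⊆ Icc 1 m)
    (hbig : 2 * a ≤ #W + oddContig m W + 1)
    (h : 1 ∉ evenFromEnd W ∨ ∃ s ∈ oddRunStarts W, 1 < s ∧ m ≤ runEnd W s) :
    ∃ T ⊆ W, IsSparse T ∧ #T = a ∧ 1 ∉ T := by
  suffices ∃ T ⊆ evenFromEnd W, a ≤ #T ∧ 1 ∉ T by
    obtain ⟨T', hT', hcard, hT'1⟩ := this
    obtain ⟨T, hTT', rfl⟩ := exists_subset_card_eq hcard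
    exact ⟨T, hTT'.trans (hT'.trans (filter_subset _ _)),
      (isSparse_evenFromEnd W).mono (hTT'.trans hT'), rfl, fun h => hT'1 (hTT' h)⟩
  have hcount := card_add_card_oddRunStarts_le W
  have hoc := oddContig_le_card_oddRunStarts m W
  have hF := card_le_card (filter_subset (fun i => 2 ≤ i ∧ runEnd W i < m) (oddRunStarts W))
  by_cases h1 : 1 ∉ evenFromEnd W
  · exact ⟨_, subset_rfl, by omega, h1⟩
  obtain ⟨s, hs, hs1, hsm⟩ := h.resolve_left h1
  rw [not_not] at h1
  -- the odd runs starting at `1` and at `s` are not counted by `oddContig`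
  have h1S : 1 ∈ oddRunStarts W := mem_filter.2 ⟨h1, fun h0 => by simpa using hW h0⟩
  have hsub : (oddRunStarts W).filter (fun i => 2 ≤ i ∧ runEnd W i < m) ⊆
      ((oddRunStarts W).erase 1).erase s := by
    intro x hx
    simp only [mem_filter, mem_erase] at hx ⊢
    exact ⟨by rintro rfl; omega, by omega, hx.1⟩
  have hsubcard := card_le_card hsub
  rw [card_erase_of_mem (mem_erase.2 ⟨by omega, hs⟩), card_erase_of_mem h1S] at hsubcard
  have := one_lt_card.2 ⟨1, h1S, s, hs, by omega⟩
  exact ⟨(evenFromEnd W).erase 1, erase_subset _ _, by rw [card_erase_of_mem h1]; omega,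
    notMem_erase _ _⟩

theorem exists_sparse_subset {m a : ℕ} {W : Finset ℕ} (hW : W ⊆ Icc 1 m) (ham : 2 * a ≤ m)
    (hbig : 2 * a ≤ #W + oddContig m W + 1) :
    ∃ T ⊆ W, IsSparse T ∧ #T = a ∧ (1 ∉ T ∨ m ∉ T) := by
  by_cases hfull : Icc 1 m ⊆ W
  · refine ⟨(range a).image (2 * · + 2), fun x hx => hfull ?_, ?_, ?_, Or.inl ?_⟩
    · obtain ⟨j, hj, rfl⟩ := mem_image.1 hx
      exact mem_Icc.2 ⟨by omega, by have := mem_range.1 hj; omega⟩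
    · rintro _ hx hx1
      obtain ⟨i, -, rfl⟩ := mem_image.1 hx
      obtain ⟨j, -, hj⟩ := mem_image.1 hx1
      omega
    · exact (card_image_of_injective _ fun i j h => by omega).trans (card_range a)
    · simp
  -- `g` is the last gap of `W` in `[1, m]`, so that the last run of `W` is `[g + 1, m]`
  obtain ⟨g, hg, hgmax⟩ : ∃ g ∈ Icc 1 m \ W, ∀ x ∈ Icc 1 m \ W, x ≤ g :=
    ⟨_, max'_mem _ (sdiff_nonempty.2 hfull), fun x hx => le_max' _ x hx⟩
  obtain ⟨hgm, hgW⟩ := mem_sdiff.1 hg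
  rw [mem_Icc] at hgm
  have hrun : Icc (g + 1) m ⊆ W := fun x hx => by
    have := mem_Icc.1 hx
    by_contra hxW
    have := hgmax x (mem_sdiff.2 ⟨mem_Icc.2 ⟨by omega, this.2⟩, hxW⟩)
    omega
  rcases Nat.even_or_odd (m - g) with heven | hodd
  · have hW' := reflect_subset_Icc hW
    have h1 : 1 ∉ evenFromEnd (reflect m W) := by
      intro h1
      obtain ⟨h1W, hev⟩ := mem_filter.1 h1
      have hmW : m ∈ W := by simpa using ((mem_reflect hW).1 h1W).2
      have hgm' : g < m := lt_of_le_of_ne hgm.2 (by rintro rfl; exact hgW hmW)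
      have hend : runEnd (reflect m W) 1 = m - g := by
        refine runEnd_eq (by omega) (fun x hx => ?_) fun h => hgW ?_
        · have := mem_Icc.1 hx
          exact (mem_reflect hW).2
            ⟨mem_Icc.2 ⟨by omega, by omega⟩, hrun (mem_Icc.2 ⟨by omega, by omega⟩)⟩
        · simpa [show m + 1 - (m - g + 1) = g by omega] using ((mem_reflect hW).1 h).2
      rw [hend] at hev
      obtain ⟨⟨r, hr⟩, ⟨s, hs⟩⟩ := And.intro heven hev
      omega
    obtain ⟨T, hTW, hT, hcard, hT1⟩ := exists_sparse_of_evenFromEnd (a := a) hW'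
      (by rw [card_reflect hW]; have := oddContig_le_oddContig_reflect hW; omega) (Or.inl h1)
    have hT' := hTW.trans hW'
    refine ⟨reflect m T, by rw [← reflect_reflect hW]; exact image_subset_image hTW,
      hT.reflect hT', by rw [card_reflect hT', hcard], Or.inr fun hm => hT1 ?_⟩
    simpa using ((mem_reflect hT').1 hm).2
  · have hgm' : g < m := by obtain ⟨r, hr⟩ := hodd; omega
    have hend : runEnd W (g + 1) = m :=
      runEnd_eq hgm' ((Icc_subset_Icc_left (by omega)).trans hrun)
        fun h => by have := mem_Icc.1 (hW h); omega
    have hsS : g + 1 ∈ oddRunStarts W := by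
      refine mem_filter.2
        ⟨mem_filter.2 ⟨hrun (mem_Icc.2 ⟨le_rfl, hgm'⟩), ?_⟩, by simpa using hgW⟩
      obtain ⟨r, hr⟩ := hodd
      exact ⟨r, by omega⟩
    obtain ⟨T, hTW, hT, hcard, hT1⟩ :=
      exists_sparse_of_evenFromEnd hW hbig (Or.inr ⟨g + 1, hsS, by omega, hend.ge⟩)
    exact ⟨T, hTW, hT, hcard, Or.inl hT1⟩

theorem not_isFace_iff {d m : ℕ} {W : Finset ℕ} (hW : W ⊆ Icc 1 m) :
    ¬ isFace d m W ↔ d < #W + oddContig m W := by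
  simp only [isFace, hW, true_and, not_and, not_le]
  omega

theorem card_le_oddContig_add_one {m : ℕ} {T : Finset ℕ} (hT : IsSparse T)
    (hTm : T ⊆ Icc 1 (m - 1) ∨ T ⊆ Icc 2 m) : #T ≤ oddContig m T + 1 := by
  have hinner : #(T.filter fun x => 2 ≤ x ∧ x ≤ m - 1) ≤ oddContig m T := by
    refine card_le_card_of_injOn (fun x => (x, x)) (fun x hx => ?_)
      fun x _ y _ h => (Prod.ext_iff.1 h).1
    obtain ⟨hxT, hx2, hxm⟩ := mem_filter.1 hx
    simp only [coe_filter, Set.mem_ofPred_eq, mem_product, mem_Icc, Icc_self,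
      singleton_subset_iff]
    refine ⟨⟨⟨hx2, hxm⟩, hx2, hxm⟩, le_rfl, hxT, fun h => hT _ h ?_, hT x hxT, by simp⟩
    rwa [Nat.sub_add_cancel (by omega)]
  have hends : #(T.filter fun x => ¬(2 ≤ x ∧ x ≤ m - 1)) ≤ 1 := by
    refine card_le_one.2 fun x hx y hy => ?_
    obtain ⟨hxT, hx⟩ := mem_filter.1 hx
    obtain ⟨hyT, hy⟩ := mem_filter.1 hy
    rcases hTm with h | h <;> have := mem_Icc.1 (h hxT) <;> have := mem_Icc.1 (h hyT) <;> omega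
  have := card_filter_add_card_filter_not (s := T) fun x => 2 ≤ x ∧ x ≤ m - 1
  omega

theorem stanleyReisner_cyclic_even_general (k : Type*) [Field k] (d m : ℕ)
    (hd : Even d) (hm : d + 1 < m) :
    SRideal k d m = idealI k m ((d + 2) / 2) 1 (m - 1) + idealI k m ((d + 2) / 2) 2 m := by
  obtain ⟨c, rfl⟩ := hd
  rw [show (c + c + 2) / 2 = c + 1 by omega, idealI_eq_span_sparse c.succ_pos,
    idealI_eq_span_sparse c.succ_pos, Submodule.add_eq_sup, ← Ideal.span_union, SRideal]
  apply le_antisymm <;> rw [Ideal.span_le]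
  · rintro _ ⟨W, hW, hnf, rfl⟩
    rw [not_isFace_iff hW] at hnf
    obtain ⟨T, hTW, hT, hcard, hT1m⟩ :=
      exists_sparse_subset (a := c + 1) hW (by omega) (by omega)
    have hTm : ∀ x ∈ T, 1 ≤ x ∧ x ≤ m := fun x hx => mem_Icc.1 (hW (hTW hx))
    rw [SetLike.mem_coe, ← prod_sdiff hTW]
    refine Ideal.mul_mem_left _ _ (Ideal.subset_span ?_)
    rcases hT1m with h1 | hm
    · refine Or.inr ⟨T, fun x hx => mem_Icc.2 ⟨?_, (hTm x hx).2⟩, hT, hcard, rfl⟩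
      exact (hTm x hx).1.lt_of_ne (by rintro rfl; exact h1 hx)
    · refine Or.inl ⟨T, fun x hx => mem_Icc.2 ⟨(hTm x hx).1, ?_⟩, hT, hcard, rfl⟩
      exact Nat.le_sub_one_of_lt ((hTm x hx).2.lt_of_ne (by rintro rfl; exact hm hx))
  · rintro _ (⟨T, hTm, hT, hcard, rfl⟩ | ⟨T, hTm, hT, hcard, rfl⟩) <;>
    · have hTW : T ⊆ Icc 1 m := hTm.trans (Icc_subset_Icc (by omega) (by omega))
      have := card_le_oddContig_add_one hT (by tauto)
      exact Ideal.subset_span ⟨T, hTW, (not_isFace_iff hTW).2 (by omega), rfl⟩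

/-- For `d` even with `2 ≤ d < m − 1` and `a = (d+2)/2`, the Stanley–Reisner ideal of
`Δ(d,m)` equals `I_{a,1,m−1} + I_{a,2,m}`. -/
theorem stanleyReisner_cyclic_even (k : Type*) [Field k] (d m : ℕ)
    (hd : Even d) (hd2 : 2 ≤ d) (hm : d + 1 < m) :
    SRideal k d m = idealI k m ((d + 2) / 2) 1 (m - 1) + idealI k m ((d + 2) / 2) 2 m :=
  stanleyReisner_cyclic_even_general k d m hd hm
end

section
/- Let d be an even integer and m an integer with 2 ≤ d and d+1 < m, and set a = (d+2)/2. For a subset U ⊆ {1,…,m} let p(U) denote the number of odd contiguous subsets of U. If W ⊆ {1,…,m} satisfies a < #W ≤ d and p(W) > d − #W, then there exists w ∈ W such that p(W ∖ {w}) > d − #W + 1. -/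
/-!
If `W` contains two consecutive elements, take the maximal run `{i, …, e}` of `W` through them.
When `i ≥ 2`, deleting `i + 1` creates the new odd run `{i}`; the only run that can be destroyed
is `{i, …, e}` itself, and if it was odd it is replaced by the odd run `{i + 2, …, e}`. When
`i = 1`, the run cannot reach `m` (otherwise `W = {1, …, m}` has no odd contiguous subsets),
and deleting `e − 1` creates the new odd run `{e}` without touching the others. Either way
`p` grows by at least one.

If `W` has no two consecutive elements, every element of `W` in `[2, m − 1]` is an odd run on
its own, so deleting `1` (or any element, if `1 ∉ W`) leaves `p ≥ #W − 2`, which exceeds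
`d − #W + 1` because `#W ≥ d/2 + 2`.
-/

open Finset

def oddRuns (m : ℕ) (W : Finset ℕ) : Finset (ℕ × ℕ) :=
  (Icc 2 (m - 1) ×ˢ Icc 2 (m - 1)).filter
    (fun p : ℕ × ℕ => p.1 ≤ p.2 ∧ Icc p.1 p.2 ⊆ W ∧
      p.1 - 1 ∉ W ∧ p.2 + 1 ∉ W ∧ Odd (p.2 - p.1 + 1))

section OddRuns

variable {m : ℕ} {W : Finset ℕ}

theorem oddContig_eq_card_oddRuns (m : ℕ) (W : Finset ℕ) : oddContig m W = #(oddRuns m W) :=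
  rfl

theorem mem_oddRuns {a b : ℕ} :
    (a, b) ∈ oddRuns m W ↔ 2 ≤ a ∧ a ≤ b ∧ b < m ∧ Icc a b ⊆ W ∧
      a - 1 ∉ W ∧ b + 1 ∉ W ∧ Odd (b - a + 1) := by
  simp only [oddRuns, mem_filter, mem_product, mem_Icc]
  constructor
  · rintro ⟨⟨⟨ha, -⟩, -, hb⟩, hab, h⟩
    exact ⟨ha, hab, by omega, h⟩
  · rintro ⟨ha, hab, hb, h⟩
    exact ⟨⟨⟨ha, by omega⟩, by omega, by omega⟩, hab, h⟩

theorem mk_self_mem_oddRuns {y : ℕ} (hy : 2 ≤ y) (hym : y < m) (hyW : y ∈ W)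
    (hpred : y - 1 ∉ W) (hsucc : y + 1 ∉ W) : (y, y) ∈ oddRuns m W := by
  rw [mem_oddRuns, Icc_self, singleton_subset_iff]
  exact ⟨hy, le_rfl, hym, hyW, hpred, hsucc, by simp⟩

theorem mem_oddRuns_of_subset {W' : Finset ℕ} {a b : ℕ} (h : (a, b) ∈ oddRuns m W)
    (hW' : W' ⊆ W) (hab : Icc a b ⊆ W') : (a, b) ∈ oddRuns m W' := by
  obtain ⟨ha, hle, hb, -, hpred, hsucc, hodd⟩ := mem_oddRuns.mp h
  exact mem_oddRuns.mpr ⟨ha, hle, hb, hab, fun h => hpred (hW' h), fun h => hsucc (hW' h), hodd⟩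

theorem oddContig_eq_zero_of_Icc_subset (h : Icc 1 m ⊆ W) : oddContig m W = 0 := by
  rw [oddContig_eq_card_oddRuns, card_eq_zero, eq_empty_iff_forall_notMem]
  rintro ⟨a, b⟩ hab
  obtain ⟨ha, hle, hb, -, hpred, -⟩ := mem_oddRuns.mp hab
  exact hpred (h (mem_Icc.mpr ⟨by omega, by omega⟩))

theorem mk_add_two_mem_oddRuns_erase_succ {i b : ℕ} (h : (i, b) ∈ oddRuns m W)
    (hsucc : i + 1 ∈ W) : (i + 2, b) ∈ oddRuns m (W.erase (i + 1)) := by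
  obtain ⟨-, hib, hb, hsub, -, hb₁, hodd⟩ := mem_oddRuns.mp h
  have hbi : b ≠ i := by rintro rfl; exact hb₁ hsucc
  obtain ⟨t, ht⟩ := hodd
  refine mem_oddRuns.mpr ⟨by omega, by omega, hb, fun z hz => ?_, by simp,
    fun h => hb₁ (mem_of_mem_erase h), ⟨t - 1, by omega⟩⟩
  rw [mem_Icc] at hz
  exact mem_erase.mpr ⟨by omega, hsub (mem_Icc.mpr ⟨by omega, hz.2⟩)⟩

theorem mem_oddRuns_erase_succ {i a b : ℕ} (h : (a, b) ∈ oddRuns m W) (hai : a ≠ i)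
    (hpred : i - 1 ∉ W) (hiW : i ∈ W) : (a, b) ∈ oddRuns m (W.erase (i + 1)) := by
  obtain ⟨-, -, -, hsub, ha₀, -⟩ := mem_oddRuns.mp h
  -- a run of `W` through `i + 1` would have to start at `i`, since `i - 1 ∉ W` and `i ∈ W`
  have hout : i + 1 ∉ Icc a b := by
    rw [mem_Icc]
    rintro ⟨h₁, h₂⟩
    rcases Nat.lt_or_ge a i with h | h
    · exact hpred (hsub (mem_Icc.mpr ⟨by omega, by omega⟩))
    · exact ha₀ (by rwa [show a - 1 = i by omega])
  exact mem_oddRuns_of_subset h (erase_subset _ _) fun z hz =>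
    mem_erase.mpr ⟨fun h => hout (h ▸ hz), hsub hz⟩

theorem oddContig_lt_oddContig_erase_succ {i : ℕ} (hi : 2 ≤ i) (him : i < m)
    (hpred : i - 1 ∉ W) (hiW : i ∈ W) (hsucc : i + 1 ∈ W) :
    oddContig m W < oddContig m (W.erase (i + 1)) := by
  let f : ℕ × ℕ → ℕ × ℕ := fun p => if p.1 = i then (i + 2, p.2) else p
  have hmaps : ∀ p ∈ oddRuns m W, f p ∈ oddRuns m (W.erase (i + 1)) := by
    rintro ⟨a, b⟩ hab
    by_cases hai : a = i
    · subst hai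
      simpa [f] using mk_add_two_mem_oddRuns_erase_succ hab hsucc
    · simpa [f, hai] using mem_oddRuns_erase_succ hab hai hpred hiW
  have hinj : Set.InjOn f (oddRuns m W) := by
    have hstart : ∀ p ∈ oddRuns m W, p.1 ≠ i + 2 := by
      rintro ⟨a, b⟩ hab rfl
      exact (mem_oddRuns.mp hab).2.2.2.2.1 (by simpa using hsucc)
    rintro ⟨a, b⟩ hab ⟨a', b'⟩ hab' h
    have ha := hstart _ hab
    have ha' := hstart _ hab'
    simp only [f] at h ha ha'
    split_ifs at h <;> simp only [Prod.mk.injEq] at h ⊢ <;> omega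
  have hnew : (i, i) ∈ oddRuns m (W.erase (i + 1)) :=
    mk_self_mem_oddRuns hi him (mem_erase.mpr ⟨by omega, hiW⟩)
      (fun h => hpred (mem_of_mem_erase h)) (notMem_erase _ _)
  have hnotImage : (i, i) ∉ (oddRuns m W).image f := by
    simp only [mem_image, not_exists, not_and]
    rintro ⟨a, b⟩ hab h
    by_cases hai : a = i
    · simp [f, hai] at h
    · simp only [f, if_neg hai, Prod.mk.injEq] at h
      exact hai h.1
  have hssub : (oddRuns m W).image f ⊂ oddRuns m (W.erase (i + 1)) :=
    (ssubset_iff_of_subset (image_subset_iff.mpr hmaps)).mpr ⟨_, hnew, hnotImage⟩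
  rw [oddContig_eq_card_oddRuns, oddContig_eq_card_oddRuns, ← card_image_of_injOn hinj]
  exact card_lt_card hssub

theorem oddContig_lt_oddContig_erase_pred {e : ℕ} (he : 2 ≤ e) (hem : e < m)
    (hrun : Icc 1 e ⊆ W) (hsucc : e + 1 ∉ W) :
    oddContig m W < oddContig m (W.erase (e - 1)) := by
  have hsub : oddRuns m W ⊆ oddRuns m (W.erase (e - 1)) := by
    rintro ⟨a, b⟩ hab
    obtain ⟨ha, -, -, hsubW, ha₀, -⟩ := mem_oddRuns.mp hab
    have hea : e + 1 < a := by
      by_contra h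
      exact ha₀ (hrun (mem_Icc.mpr ⟨by omega, by omega⟩))
    refine mem_oddRuns_of_subset hab (erase_subset _ _) fun z hz => ?_
    exact mem_erase.mpr ⟨by rw [mem_Icc] at hz; omega, hsubW hz⟩
  have hnew : (e, e) ∈ oddRuns m (W.erase (e - 1)) :=
    mk_self_mem_oddRuns he hem
      (mem_erase.mpr ⟨by omega, hrun (mem_Icc.mpr ⟨by omega, le_rfl⟩)⟩)
      (notMem_erase _ _) (fun h => hsucc (mem_of_mem_erase h))
  have hold : (e, e) ∉ oddRuns m W := fun h =>
    (mem_oddRuns.mp h).2.2.2.2.1 (hrun (mem_Icc.mpr ⟨by omega, by omega⟩))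
  rw [oddContig_eq_card_oddRuns, oddContig_eq_card_oddRuns]
  exact card_lt_card ((ssubset_iff_of_subset hsub).mpr ⟨_, hnew, hold⟩)

theorem exists_maximal_run (hW : W ⊆ Icc 1 m) {x : ℕ} (hx : x ∈ W) :
    ∃ i e, i ≤ x ∧ x ≤ e ∧ Icc i e ⊆ W ∧ i - 1 ∉ W ∧ e + 1 ∉ W := by
  have hzero : (0 : ℕ) ∉ W := fun h => by simpa using hW h
  have hleft : ∃ j, x - (j + 1) ∉ W := ⟨x, by simpa using hzero⟩
  have hright : ∃ k, x + k + 1 ∉ W := ⟨m, fun h => by simpa using (mem_Icc.mp (hW h)).2⟩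
  refine ⟨x - Nat.find hleft, x + Nat.find hright, Nat.sub_le _ _, Nat.le_add_right _ _,
    fun y hy => ?_, by simpa [Nat.sub_sub] using Nat.find_spec hleft, Nat.find_spec hright⟩
  rw [mem_Icc] at hy
  rcases lt_trichotomy y x with h | rfl | h
  · have := not_not.mp (Nat.find_min hleft (show x - y - 1 < Nat.find hleft by omega))
    rwa [show x - (x - y - 1 + 1) = y by omega] at this
  · exact hx
  · have := not_not.mp (Nat.find_min hright (show y - x - 1 < Nat.find hright by omega))
    rwa [show x + (y - x - 1) + 1 = y by omega] at this

theorem exists_oddContig_lt_oddContig_erase (hW : W ⊆ Icc 1 m) (hpos : 0 < oddContig m W)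
    {x : ℕ} (hx : x ∈ W) (hx₁ : x + 1 ∈ W) :
    ∃ w ∈ W, oddContig m W < oddContig m (W.erase w) := by
  obtain ⟨i, e, hix, hxe, hrun, hpred, hsucc⟩ := exists_maximal_run hW hx
  have hiW : i ∈ W := hrun (mem_Icc.mpr ⟨le_rfl, hix.trans hxe⟩)
  have hxe' : x + 1 ≤ e := by
    by_contra h
    exact hsucc (by rwa [show e = x by omega])
  have hi₁ : i + 1 ∈ W := hrun (mem_Icc.mpr ⟨by omega, by omega⟩)
  by_cases hi : 2 ≤ i
  · have him : i < m := by simpa using (mem_Icc.mp (hW hi₁)).2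
    exact ⟨i + 1, hi₁, oddContig_lt_oddContig_erase_succ hi him hpred hiW hi₁⟩
  · have hi1 : i = 1 := by have := (mem_Icc.mp (hW hiW)).1; omega
    subst hi1
    have hem : e < m := by
      by_contra h
      exact hpos.ne' <|
        oddContig_eq_zero_of_Icc_subset ((Icc_subset_Icc_right (by omega)).trans hrun)
    exact ⟨e - 1, hrun (mem_Icc.mpr ⟨by omega, by omega⟩),
      oddContig_lt_oddContig_erase_pred (by omega) hem hrun hsucc⟩

theorem card_le_oddContig_add_one_s1 {U : Finset ℕ} (hU : U ⊆ Icc 2 m)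
    (hiso : ∀ x ∈ U, x + 1 ∉ U) : #U ≤ oddContig m U + 1 := by
  have hsingle : #(U.erase m) ≤ oddContig m U := by
    refine card_le_card_of_injOn (fun y => (y, y)) (fun y hy => ?_)
      (fun y _ z _ h => by simpa using h)
    obtain ⟨hym, hyU⟩ := mem_erase.mp hy
    obtain ⟨hy2, hym'⟩ := mem_Icc.mp (hU hyU)
    refine mk_self_mem_oddRuns hy2 (by omega) hyU (fun h => ?_) (hiso y hyU)
    exact hiso _ h (by rwa [Nat.sub_add_cancel (by omega)])
  have := pred_card_le_card_erase (s := U) (a := m)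
  omega

theorem exists_erase_subset_Icc_two (hW : W ⊆ Icc 1 m) (hne : W.Nonempty) :
    ∃ w ∈ W, W.erase w ⊆ Icc 2 m := by
  have hsub : ∀ w ∈ W, (w = 1 ∨ 1 ∉ W) → W.erase w ⊆ Icc 2 m := by
    intro w _ h1 y hy
    obtain ⟨hyw, hyW⟩ := mem_erase.mp hy
    have := mem_Icc.mp (hW hyW)
    have hy1 : y ≠ 1 := by rintro rfl; rcases h1 with rfl | h1 <;> tauto
    exact mem_Icc.mpr ⟨by omega, this.2⟩
  by_cases h1 : 1 ∈ W
  · exact ⟨1, h1, hsub 1 h1 (Or.inl rfl)⟩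
  · obtain ⟨w, hw⟩ := hne
    exact ⟨w, hw, hsub w hw (Or.inr h1)⟩

end OddRuns

theorem exists_vertex_removal_general (d m : ℕ) (hd : Even d)
    (W : Finset ℕ) (hW : W ⊆ Finset.Icc 1 m)
    (hlow : (d + 2) / 2 < W.card) (hhigh : W.card ≤ d)
    (hp : d - W.card < oddContig m W) :
    ∃ w ∈ W, d - W.card + 1 < oddContig m (W.erase w) := by
  by_cases hadj : ∃ x ∈ W, x + 1 ∈ W
  · obtain ⟨x, hx, hx₁⟩ := hadj
    obtain ⟨w, hw, hlt⟩ := exists_oddContig_lt_oddContig_erase hW (by omega) hx hx₁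
    exact ⟨w, hw, by omega⟩
  · simp only [not_exists, not_and] at hadj
    obtain ⟨w, hw, hsub⟩ := exists_erase_subset_Icc_two hW (card_pos.mp (by omega))
    have hcard := card_le_oddContig_add_one_s1 hsub fun x hx hx₁ =>
      hadj x (mem_of_mem_erase hx) (mem_of_mem_erase hx₁)
    rw [card_erase_of_mem hw] at hcard
    obtain ⟨k, rfl⟩ := hd
    exact ⟨w, hw, by omega⟩

/-- Let `d` be even, `2 ≤ d`, `d + 1 < m`, and `a = (d+2)/2`. If `W ⊆ {1, …, m}` satisfies
`a < #W ≤ d` and the number `p(W)` of odd contiguous subsets of `W` exceeds `d − #W`, then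
there is `w ∈ W` with `p(W ∖ {w}) > d − #W + 1`. -/
theorem exists_vertex_removal (d m : ℕ) (hd : Even d) (hd2 : 2 ≤ d) (hm : d + 1 < m)
    (W : Finset ℕ) (hW : W ⊆ Finset.Icc 1 m)
    (hlow : (d + 2) / 2 < W.card) (hhigh : W.card ≤ d)
    (hp : d - W.card < oddContig m W) :
    ∃ w ∈ W, d - W.card + 1 < oddContig m (W.erase w) :=
  exists_vertex_removal_general d m hd W hW hlow hhigh hp
end

section
/- Let k be a field, d an even integer with d ≥ 4, and m an integer with d+1 < m; set a = (d+2)/2. In k[x_1,…,x_m] let I = I_{a,1,m−1} + I_{a,2,m}. Then for every v ∈ I_{a−1,2,m−1} and every w ∈ I_{a−2,3,m−2}, the product x_1 · x_m · v · w lies in I. -/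
open Finset

/-- The conditions on `t` that make `∏ j < n, x_{t j}` one of the generators of `I_{n,p,q}`. -/
def IsSparseSeq (t : ℕ → ℕ) (n p q : ℕ) : Prop :=
  p ≤ t 0 ∧ t (n - 1) ≤ q ∧ ∀ j, j + 1 < n → t j + 2 ≤ t (j + 1)

def seqAppend (t : ℕ → ℕ) (n : ℕ) (s : ℕ → ℕ) (j : ℕ) : ℕ :=
  if j < n then t j else s (j - n)

section seqAppend

variable {t s : ℕ → ℕ} {n j : ℕ}

theorem seqAppend_of_lt (h : j < n) : seqAppend t n s j = t j := if_pos h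

theorem seqAppend_add (n j : ℕ) : seqAppend t n s (n + j) = s j := by
  simp [seqAppend]

theorem prod_range_seqAppend {M : Type*} [CommMonoid M] (f : ℕ → M) (n₁ n₂ : ℕ) :
    ∏ j ∈ range (n₁ + n₂), f (seqAppend t n₁ s j) =
      (∏ j ∈ range n₁, f (t j)) * ∏ j ∈ range n₂, f (s j) := by
  rw [prod_range_add]
  congr 1
  · exact prod_congr rfl fun j hj => by rw [seqAppend_of_lt (mem_range.1 hj)]
  · simp only [seqAppend_add]

end seqAppend

namespace IsSparseSeq

variable {t s : ℕ → ℕ} {n p q : ℕ}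

theorem singleton (c : ℕ) : IsSparseSeq (fun _ => c) 1 c c :=
  ⟨le_rfl, le_rfl, fun _ hj => absurd hj (by omega)⟩

theorem take (h : IsSparseSeq t n p q) {i : ℕ} (hi : i ≤ n) :
    IsSparseSeq t i p (t (i - 1)) :=
  ⟨h.1, le_rfl, fun j hj => h.2.2 j (by omega)⟩

theorem drop (h : IsSparseSeq t n p q) {i : ℕ} (hi : i < n) :
    IsSparseSeq (fun j => t (i + j)) (n - i) (t i) q := by
  refine ⟨le_rfl, ?_, fun j hj => h.2.2 (i + j) (by omega)⟩
  show t (i + (n - i - 1)) ≤ q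
  rw [show i + (n - i - 1) = n - 1 by omega]
  exact h.2.1

theorem append {n₁ n₂ q₁ p₂ : ℕ} (ht : IsSparseSeq t n₁ p q₁) (hs : IsSparseSeq s n₂ p₂ q)
    (hgap : q₁ + 2 ≤ p₂) (h₁ : 0 < n₁) (h₂ : 0 < n₂) :
    IsSparseSeq (seqAppend t n₁ s) (n₁ + n₂) p q := by
  refine ⟨by rw [seqAppend_of_lt h₁]; exact ht.1, ?_, fun j hj => ?_⟩
  · rw [show n₁ + n₂ - 1 = n₁ + (n₂ - 1) by omega, seqAppend_add]
    exact hs.2.1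
  · rcases lt_or_ge (j + 1) n₁ with hj₁ | hj₁
    · rw [seqAppend_of_lt hj₁, seqAppend_of_lt (by omega)]
      exact ht.2.2 j hj₁
    rcases hj₁.eq_or_lt with hj₁ | hj₁
    · obtain rfl : n₁ = j + 1 := hj₁
      have hq₁ : t j ≤ q₁ := ht.2.1
      have hp₂ : p₂ ≤ seqAppend t (j + 1) s (j + 1) := by simpa [seqAppend] using hs.1
      rw [seqAppend_of_lt j.lt_succ_self]
      omega
    · obtain ⟨l, rfl⟩ : ∃ l, j = n₁ + l := ⟨j - n₁, by omega⟩
      rw [seqAppend_add, add_assoc, seqAppend_add]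
      exact hs.2.2 l (by omega)

end IsSparseSeq

theorem mem_idealI_of_prod_dvd {k : Type*} [Field k] {m n p q : ℕ} {r : ℕ → ℕ}
    {f : MvPolynomial (Fin m) k} (hr : IsSparseSeq r n p q)
    (hf : ∏ j ∈ range n, Xv k m (r j) ∣ f) : f ∈ idealI k m n p q :=
  Ideal.mem_of_dvd _ hf (Ideal.subset_span ⟨r, hr.1, hr.2.1, hr.2.2, rfl⟩)

theorem prod_range_eq_mul_prod_range_add {M : Type*} [CommMonoid M] (f : ℕ → M) {i n : ℕ}
    (h : i ≤ n) :
    ∏ j ∈ range n, f j = (∏ j ∈ range i, f j) * ∏ j ∈ range (n - i), f (i + j) := by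
  rw [← prod_range_mul_prod_Ico f h, prod_Ico_eq_prod_range]

theorem le_add_mul_of_forall_le_add {f : ℕ → ℕ} {c n : ℕ} (h : ∀ j < n, f (j + 1) ≤ f j + c) :
    f n ≤ f 0 + c * n := by
  induction n with
  | zero => simp
  | succ n ih =>
    have := ih fun j hj => h j (by omega)
    have := h n n.lt_succ_self
    rw [mul_add_one]
    omega

theorem exists_add_two_le_or_le_add (t s : ℕ → ℕ) (b : ℕ) :
    (∃ i ≤ b, s i + 2 ≤ t (i + 1)) ∨ (∃ i ≤ b, t i + 2 ≤ s i) ∨ t (b + 1) ≤ t 0 + 2 * (b + 1) := by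
  by_contra! h
  obtain ⟨hts, hst, hlt⟩ := h
  refine hlt.not_ge (le_add_mul_of_forall_le_add fun j hj => ?_)
  have := hts j (by omega)
  have := hst j (by omega)
  omega

open scoped Pointwise in
theorem mul_mul_mem_of_forall_mem {R : Type*} [CommSemiring R] {J : Ideal R} {S T : Set R}
    {c v w : R} (h : ∀ g ∈ S, ∀ f ∈ T, c * g * f ∈ J) (hv : v ∈ Ideal.span S)
    (hw : w ∈ Ideal.span T) : c * v * w ∈ J := by
  have hvw : v * w ∈ Ideal.span (S * T) := Ideal.span_mul_span' S T ▸ Ideal.mul_mem_mul hv hw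
  have hle : Ideal.span (S * T) ≤ Submodule.comap (LinearMap.mulLeft R c) J := by
    rw [Ideal.span_le]
    rintro _ ⟨g, hg, f, hf, rfl⟩
    simpa [mul_assoc] using h g hg f hf
  simpa [mul_assoc] using hle hvw

theorem mul_prod_mem_idealI_sup {k : Type*} [Field k] {b m : ℕ} (hm : 2 * b + 6 ≤ m)
    {t s : ℕ → ℕ} (ht : IsSparseSeq t (b + 2) 2 (m - 1))
    (hs : IsSparseSeq s (b + 1) 3 (m - 2)) :
    Xv k m 1 * Xv k m m * (∏ j ∈ range (b + 2), Xv k m (t j)) *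
        ∏ j ∈ range (b + 1), Xv k m (s j) ∈
      idealI k m (b + 3) 1 (m - 1) + idealI k m (b + 3) 2 m := by
  by_cases hA : 3 ≤ t 0
  · refine Submodule.mem_sup_left ?_
    rw [show b + 3 = 1 + (b + 2) by omega]
    refine mem_idealI_of_prod_dvd ((IsSparseSeq.singleton 1).append ⟨hA, ht.2⟩ le_rfl one_pos
      (by omega)) ⟨Xv k m m * ∏ j ∈ range (b + 1), Xv k m (s j), ?_⟩
    rw [prod_range_seqAppend, prod_range_one]
    ring
  rcases exists_add_two_le_or_le_add t s b with ⟨i, hi, hsi⟩ | ⟨i, hi, hti⟩ | hD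
  · have hr := (IsSparseSeq.singleton 1).append ((hs.take (i := i + 1) (by omega)).append
      (ht.drop (i := i + 1) (by omega)) hsi (by omega) (by omega)) le_rfl one_pos (by omega)
    refine Submodule.mem_sup_left ?_
    rw [show b + 3 = 1 + (i + 1 + (b + 2 - (i + 1))) by omega]
    refine mem_idealI_of_prod_dvd hr ⟨Xv k m m * (∏ j ∈ range (i + 1), Xv k m (t j)) *
      ∏ j ∈ range (b + 1 - (i + 1)), Xv k m (s (i + 1 + j)), ?_⟩
    rw [prod_range_seqAppend, prod_range_seqAppend, prod_range_one,
      prod_range_eq_mul_prod_range_add (fun j => Xv k m (t j)) (show i + 1 ≤ b + 2 by omega),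
      prod_range_eq_mul_prod_range_add (fun j => Xv k m (s j)) (show i + 1 ≤ b + 1 by omega)]
    ring
  · have hr := ((ht.take (i := i + 1) (by omega)).append (hs.drop (i := i) (by omega)) hti
      (by omega) (by omega)).append (.singleton m) (by omega) (by omega) one_pos
    refine Submodule.mem_sup_right ?_
    rw [show b + 3 = i + 1 + (b + 1 - i) + 1 by omega]
    refine mem_idealI_of_prod_dvd hr ⟨Xv k m 1 *
      (∏ j ∈ range (b + 2 - (i + 1)), Xv k m (t (i + 1 + j))) * ∏ j ∈ range i, Xv k m (s j), ?_⟩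
    rw [prod_range_seqAppend, prod_range_seqAppend, prod_range_one,
      prod_range_eq_mul_prod_range_add (fun j => Xv k m (t j)) (show i + 1 ≤ b + 2 by omega),
      prod_range_eq_mul_prod_range_add (fun j => Xv k m (s j)) (show i ≤ b + 1 by omega)]
    ring
  · have hr := IsSparseSeq.append (n₁ := b + 2) (q₁ := m - 2)
      ⟨ht.1, show t (b + 1) ≤ m - 2 by omega, ht.2.2⟩ (.singleton m) (by omega) (by omega) one_pos
    refine Submodule.mem_sup_right (mem_idealI_of_prod_dvd hr
      ⟨Xv k m 1 * ∏ j ∈ range (b + 1), Xv k m (s j), ?_⟩)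
    rw [prod_range_seqAppend (n₁ := b + 2) (n₂ := 1), prod_range_one]
    ring

/-- For `d` even, `d ≥ 4`, `d + 1 < m`, `a = (d+2)/2`: for all `v ∈ I_{a−1,2,m−1}` and
`w ∈ I_{a−2,3,m−2}`, the product `x_1 x_m v w` lies in `I = I_{a,1,m−1} + I_{a,2,m}`. -/
theorem product_mem_ideal_even (k : Type*) [Field k] (d m : ℕ)
    (hd : Even d) (hd4 : 4 ≤ d) (hm : d + 1 < m) (a : ℕ) (ha : a = (d + 2) / 2)
    (v w : MvPolynomial (Fin m) k)
    (hv : v ∈ idealI k m (a - 1) 2 (m - 1))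
    (hw : w ∈ idealI k m (a - 2) 3 (m - 2)) :
    Xv k m 1 * Xv k m m * v * w ∈ idealI k m a 1 (m - 1) + idealI k m a 2 m := by
  obtain ⟨c, rfl⟩ := hd
  obtain ⟨b, rfl⟩ : ∃ b, a = b + 3 := ⟨a - 3, by omega⟩
  refine mul_mul_mem_of_forall_mem ?_ hv hw
  rintro _ ⟨t, ht0, htq, htg, rfl⟩ _ ⟨s, hs0, hsq, hsg, rfl⟩
  exact mul_prod_mem_idealI_sup (by omega) ⟨ht0, htq, htg⟩ ⟨hs0, hsq, hsg⟩
end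

section
/- Let k be a field and m an integer with m ≥ 4. In k[x_1,…,x_m,z,T] let Q = I_{2,1,m−1} + I_{2,2,m} + (T x_2, T x_3, …, T x_{m−1}) + (zT − x_1x_m), and set S = k[x_1,…,x_m,z,T]/Q. Then the image of z in S is a non-zero-divisor of S, and S/(z) is isomorphic as a k-algebra to k[x_1,…,x_{m+1}]/(I_{2,1,m} + I_{2,2,m+1}), which is the Stanley–Reisner ring k[Δ(2,m+1)] of the boundary of the 2-dimensional cyclic polytope (an (m+1)-gon). -/
set_option synthInstance.maxHeartbeats 1000000
set_option maxHeartbeats 1000000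

/-!
Modulo `Q` every polynomial has a normal form, computed monomial by monomial: a monomial
divisible by one of the monomial generators of `Q` is `0`, and otherwise the largest power
`(x_1 x_m)^e` dividing it is traded for `(zT)^e` using the binomial generator. This `k`-linear
normal form has kernel exactly `Q`, and it commutes with multiplication by `z`, since `z` occurs
neither in the monomial generators nor in `x_1 x_m`. Hence `z f ∈ Q` forces `f ∈ Q`.

Setting `z = 0` and renaming `T` to `x_{m+1}` identifies `Q + (z)` with the Stanley–Reisner ideal
of the `(m+1)`-gon: the binomial becomes the new diagonal `x_1 x_m`, and the generators `T x_t`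
become the diagonals through `x_{m+1}`.
-/

open MvPolynomial

namespace CyclicUnprojection

section IdealI

variable {k : Type*} [Field k] {n : ℕ}

lemma idealI_one_eq (p q : ℕ) :
    idealI k n 1 p q = Ideal.span (Xv k n '' Set.Icc p q) := by
  unfold idealI
  congr 1
  ext f
  simp only [Set.mem_ofPred_eq, Set.mem_image, Set.mem_Icc, Finset.prod_range_one, Nat.sub_self]
  constructor
  · rintro ⟨t, hp, hq, -, rfl⟩
    exact ⟨t 0, ⟨hp, hq⟩, rfl⟩
  · rintro ⟨s, ⟨hp, hq⟩, rfl⟩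
    exact ⟨fun _ => s, hp, hq, fun j hj => by omega, rfl⟩

lemma idealI_two_eq (p q : ℕ) :
    idealI k n 2 p q = Ideal.span
      {f | ∃ s t, p ≤ s ∧ s + 2 ≤ t ∧ t ≤ q ∧ f = Xv k n s * Xv k n t} := by
  unfold idealI
  congr 1
  ext f
  simp only [Set.mem_ofPred_eq, Finset.prod_range_succ, Finset.prod_range_zero, one_mul]
  constructor
  · rintro ⟨t, hp, hq, hgap, rfl⟩
    exact ⟨t 0, t 1, hp, hgap 0 (by omega), hq, rfl⟩
  · rintro ⟨s, t, hp, hgap, hq, rfl⟩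
    refine ⟨fun j => if j = 0 then s else t, hp, hq, fun j hj => ?_, rfl⟩
    obtain rfl : j = 0 := by omega
    simpa using hgap

lemma span_singleton_mul_idealI_one_le_iff {f : MvPolynomial (Fin n) k} {p q : ℕ}
    {J : Ideal (MvPolynomial (Fin n) k)} :
    Ideal.span {f} * idealI k n 1 p q ≤ J ↔ ∀ t, p ≤ t → t ≤ q → f * Xv k n t ∈ J := by
  rw [idealI_one_eq, Ideal.span_mul_span', Set.singleton_mul, Set.image_image, Ideal.span_le,
    Set.image_subset_iff]
  exact ⟨fun h t hp hq => h ⟨hp, hq⟩, fun h t ht => h t ht.1 ht.2⟩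

lemma idealI_two_le_iff {p q : ℕ} {J : Ideal (MvPolynomial (Fin n) k)} :
    idealI k n 2 p q ≤ J ↔ ∀ s t, p ≤ s → s + 2 ≤ t → t ≤ q → Xv k n s * Xv k n t ∈ J := by
  rw [idealI_two_eq, Ideal.span_le]
  constructor
  · exact fun h s t hs hst ht => h ⟨s, t, hs, hst, ht, rfl⟩
  · rintro h f ⟨s, t, hs, hst, ht, rfl⟩
    exact h s t hs hst ht

/-- `s` and `t` are non-adjacent vertices of the `r`-gon with vertices `1, …, r` in cyclic order. -/
def IsDiagonal (r s t : ℕ) : Prop := 1 ≤ s ∧ s + 2 ≤ t ∧ t ≤ r ∧ ¬(s = 1 ∧ t = r)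

/-- The Stanley–Reisner ideal of the `r`-gon on the vertices `x_1, …, x_r` of `k[x_1, …, x_n]`. -/
noncomputable def polygonIdeal (k : Type*) [Field k] (n r : ℕ) : Ideal (MvPolynomial (Fin n) k) :=
  idealI k n 2 1 (r - 1) + idealI k n 2 2 r

lemma polygonIdeal_le_iff {r : ℕ} {J : Ideal (MvPolynomial (Fin n) k)} :
    polygonIdeal k n r ≤ J ↔ ∀ s t, IsDiagonal r s t → Xv k n s * Xv k n t ∈ J := by
  simp only [polygonIdeal, Ideal.add_eq_sup, sup_le_iff, idealI_two_le_iff, IsDiagonal]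
  constructor
  · rintro ⟨h₁, h₂⟩ s t ⟨hs, hst, ht, hne⟩
    by_cases hs1 : s = 1
    · exact h₁ s t hs hst (by omega)
    · exact h₂ s t (by omega) hst ht
  · intro h
    exact ⟨fun s t hs hst ht => h s t ⟨hs, hst, by omega, by omega⟩,
      fun s t hs hst ht => h s t ⟨by omega, hst, ht, by omega⟩⟩

lemma Xv_mul_Xv_mem_polygonIdeal {r s t : ℕ} (h : IsDiagonal r s t) :
    Xv k n s * Xv k n t ∈ polygonIdeal k n r :=
  polygonIdeal_le_iff.mp le_rfl s t h

end IdealI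

section IdealQ

variable (k : Type*) [Field k] (m : ℕ)

/-- The ideal `Q` of `k[x_1, …, x_m, z, T]`; `z` and `T` are `Xv k (m + 2) (m + 1)` and
`Xv k (m + 2) (m + 2)`. -/
noncomputable def idealQ : Ideal (MvPolynomial (Fin (m + 2)) k) :=
  polygonIdeal k (m + 2) m + Ideal.span {Xv k (m + 2) (m + 2)} * idealI k (m + 2) 1 2 (m - 1) +
    Ideal.span {Xv k (m + 2) (m + 1) * Xv k (m + 2) (m + 2) - Xv k (m + 2) 1 * Xv k (m + 2) m}

variable {k m}

lemma idealQ_le_iff {J : Ideal (MvPolynomial (Fin (m + 2)) k)} :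
    idealQ k m ≤ J ↔
      (∀ s t, IsDiagonal m s t → Xv k (m + 2) s * Xv k (m + 2) t ∈ J) ∧
      (∀ t, 2 ≤ t → t ≤ m - 1 → Xv k (m + 2) (m + 2) * Xv k (m + 2) t ∈ J) ∧
      Xv k (m + 2) (m + 1) * Xv k (m + 2) (m + 2) - Xv k (m + 2) 1 * Xv k (m + 2) m ∈ J := by
  simp only [idealQ, Ideal.add_eq_sup, sup_le_iff, polygonIdeal_le_iff,
    span_singleton_mul_idealI_one_le_iff, Ideal.span_singleton_le_iff_mem, and_assoc]

lemma Xv_mul_Xv_mem_idealQ {s t : ℕ} (h : IsDiagonal m s t) :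
    Xv k (m + 2) s * Xv k (m + 2) t ∈ idealQ k m :=
  (idealQ_le_iff.mp le_rfl).1 s t h

lemma T_mul_Xv_mem_idealQ {t : ℕ} (h₁ : 2 ≤ t) (h₂ : t ≤ m - 1) :
    Xv k (m + 2) (m + 2) * Xv k (m + 2) t ∈ idealQ k m :=
  (idealQ_le_iff.mp le_rfl).2.1 t h₁ h₂

lemma binomial_mem_idealQ :
    Xv k (m + 2) (m + 1) * Xv k (m + 2) (m + 2) - Xv k (m + 2) 1 * Xv k (m + 2) m ∈ idealQ k m :=
  (idealQ_le_iff.mp le_rfl).2.2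

end IdealQ

section Exponents

variable {n : ℕ}

/-- The exponent of `x_t` in the monomial `x^d`, indexed like `Xv` (so `0` unless `1 ≤ t ≤ n`). -/
def expAt (d : Fin n →₀ ℕ) (t : ℕ) : ℕ := if h : 1 ≤ t ∧ t ≤ n then d ⟨t - 1, by omega⟩ else 0

/-- The exponent vector of `Xv k n t` for `1 ≤ t ≤ n`; for other `t` it is `0`, although there
`Xv k n t = 0 ≠ monomial 0 1`. -/
noncomputable def varExp (n t : ℕ) : Fin n →₀ ℕ :=
  if h : 1 ≤ t ∧ t ≤ n then Finsupp.single ⟨t - 1, by omega⟩ 1 else 0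

lemma ext_expAt {d d' : Fin n →₀ ℕ} (h : ∀ t, expAt d t = expAt d' t) : d = d' :=
  Finsupp.ext fun i => by simpa [expAt] using h (i + 1)

lemma le_of_expAt {d d' : Fin n →₀ ℕ} (h : ∀ t, expAt d t ≤ expAt d' t) : d ≤ d' :=
  fun i => by simpa [expAt] using h (i + 1)

@[simp]
lemma expAt_add (d d' : Fin n →₀ ℕ) (t : ℕ) : expAt (d + d') t = expAt d t + expAt d' t := by
  unfold expAt; split_ifs <;> simp

@[simp]
lemma expAt_tsub (d d' : Fin n →₀ ℕ) (t : ℕ) : expAt (d - d') t = expAt d t - expAt d' t := by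
  unfold expAt; split_ifs <;> simp

@[simp]
lemma expAt_smul (e : ℕ) (d : Fin n →₀ ℕ) (t : ℕ) : expAt (e • d) t = e * expAt d t := by
  unfold expAt; split_ifs <;> simp

@[simp]
lemma expAt_varExp (s t : ℕ) :
    expAt (varExp n s) t = if 1 ≤ t ∧ t ≤ n ∧ t = s then 1 else 0 := by
  unfold expAt varExp
  split_ifs <;> simp_all [Finsupp.single_apply, Fin.ext_iff] <;> omega

lemma expAt_add_varExp_pos_iff (d : Fin n →₀ ℕ) (s t : ℕ) :
    0 < expAt (d + varExp n s) t ↔ 0 < expAt d t ∨ (1 ≤ t ∧ t ≤ n ∧ t = s) := by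
  simp only [expAt_add, expAt_varExp]
  split_ifs <;> omega

variable {k : Type*} [Field k]

lemma Xv_eq_monomial {t : ℕ} (h₁ : 1 ≤ t) (h₂ : t ≤ n) :
    Xv k n t = monomial (varExp n t) 1 := by
  rw [Xv, varExp, dif_pos ⟨h₁, h₂⟩, dif_pos ⟨h₁, h₂⟩, X]

lemma monomial_eq_smul (d : Fin n →₀ ℕ) (c : k) : monomial d c = c • monomial d 1 := by
  rw [smul_monomial, smul_eq_mul, mul_one]

lemma monomial_mul_Xv {t : ℕ} (d : Fin n →₀ ℕ) (c : k) (h₁ : 1 ≤ t) (h₂ : t ≤ n) :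
    monomial d c * Xv k n t = monomial (d + varExp n t) c := by
  rw [Xv_eq_monomial h₁ h₂, monomial_mul, mul_one]

lemma Xv_mul_Xv_dvd_monomial {s t : ℕ} {d : Fin n →₀ ℕ} (c : k) (hs : 1 ≤ s) (hst : s < t)
    (ht : t ≤ n) (hds : 0 < expAt d s) (hdt : 0 < expAt d t) :
    Xv k n s * Xv k n t ∣ monomial d c := by
  have hd : d = varExp n s + varExp n t + (d - varExp n s - varExp n t) := ext_expAt fun u => by
    simp only [expAt_add, expAt_tsub, expAt_varExp]
    grind
  refine ⟨monomial (d - varExp n s - varExp n t) c, ?_⟩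
  rw [Xv_eq_monomial hs (by omega), Xv_eq_monomial (by omega) ht, monomial_mul, monomial_mul,
    one_mul, one_mul, ← hd]

end Exponents

section NormalForm

variable {m : ℕ}

/-- `x^d` lies in the monomial part of `Q`: its support contains a diagonal of the `m`-gon, or `T`
together with one of `x_2, …, x_{m-1}`. -/
def IsNonface (m : ℕ) (d : Fin (m + 2) →₀ ℕ) : Prop :=
  (∃ s t, IsDiagonal m s t ∧ 0 < expAt d s ∧ 0 < expAt d t) ∨
    (0 < expAt d (m + 2) ∧ ∃ t, 2 ≤ t ∧ t ≤ m - 1 ∧ 0 < expAt d t)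

lemma isNonface_add_z_iff (d : Fin (m + 2) →₀ ℕ) :
    IsNonface m (d + varExp (m + 2) (m + 1)) ↔ IsNonface m d := by
  simp only [IsNonface, IsDiagonal, expAt_add_varExp_pos_iff]
  constructor
  · rintro (⟨s, t, hst, hds, hdt⟩ | ⟨hdT, t, ht₁, ht₂, hdt⟩)
    · exact Or.inl ⟨s, t, hst, by omega, by omega⟩
    · exact Or.inr ⟨by omega, t, ht₁, ht₂, by omega⟩
  · rintro (⟨s, t, hst, hds, hdt⟩ | ⟨hdT, t, ht₁, ht₂, hdt⟩)
    · exact Or.inl ⟨s, t, hst, Or.inl hds, Or.inl hdt⟩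
    · exact Or.inr ⟨Or.inl hdT, t, ht₁, ht₂, Or.inl hdt⟩

lemma isNonface_add_zT_iff (d : Fin (m + 2) →₀ ℕ) :
    IsNonface m (d + varExp (m + 2) (m + 1) + varExp (m + 2) (m + 2)) ↔
      IsNonface m d ∨ ∃ t, 2 ≤ t ∧ t ≤ m - 1 ∧ 0 < expAt d t := by
  simp only [IsNonface, IsDiagonal, expAt_add_varExp_pos_iff, and_true]
  constructor
  · rintro (⟨s, t, hst, hds, hdt⟩ | ⟨-, t, ht₁, ht₂, hdt⟩)
    · exact Or.inl (Or.inl ⟨s, t, hst, by omega, by omega⟩)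
    · exact Or.inr ⟨t, ht₁, ht₂, by omega⟩
  · rintro ((⟨s, t, hst, hds, hdt⟩ | ⟨-, t, ht₁, ht₂, hdt⟩) | ⟨t, ht₁, ht₂, hdt⟩)
    · exact Or.inl ⟨s, t, hst, by omega, by omega⟩
    all_goals exact Or.inr ⟨by omega, t, ht₁, ht₂, by omega⟩

lemma isNonface_add_x1xm_iff (hm : 4 ≤ m) (d : Fin (m + 2) →₀ ℕ) :
    IsNonface m (d + varExp (m + 2) 1 + varExp (m + 2) m) ↔
      IsNonface m d ∨ ∃ t, 2 ≤ t ∧ t ≤ m - 1 ∧ 0 < expAt d t := by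
  simp only [IsNonface, IsDiagonal, expAt_add_varExp_pos_iff]
  constructor
  · rintro (⟨s, t, hst, hds, hdt⟩ | ⟨hdT, t, ht₁, ht₂, hdt⟩)
    · by_cases hs : 0 < expAt d s
      · by_cases ht : 0 < expAt d t
        · exact Or.inl (Or.inl ⟨s, t, hst, hs, ht⟩)
        · exact Or.inr ⟨s, by omega, by omega, hs⟩
      · exact Or.inr ⟨t, by omega, by omega, by omega⟩
    · exact Or.inl (Or.inr ⟨by omega, t, ht₁, ht₂, by omega⟩)
  · rintro ((⟨s, t, hst, hds, hdt⟩ | ⟨hdT, t, ht₁, ht₂, hdt⟩) | ⟨t, ht₁, ht₂, hdt⟩)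
    · exact Or.inl ⟨s, t, hst, by omega, by omega⟩
    · exact Or.inr ⟨by omega, t, ht₁, ht₂, by omega⟩
    · -- `x_t` forms a diagonal with `x_1` if `t ≥ 3`, and with `x_m` if `t = 2` (as `m ≥ 4`)
      by_cases ht : t = 2
      · exact Or.inl ⟨t, m, by omega, by omega, by omega⟩
      · exact Or.inl ⟨1, t, by omega, by omega, by omega⟩

def x1xmExp (m : ℕ) (d : Fin (m + 2) →₀ ℕ) : ℕ := min (expAt d 1) (expAt d m)

/-- Replaces the largest power `(x_1 x_m)^e` dividing `x^d` by `(zT)^e`. -/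
noncomputable def swapExp (m : ℕ) (d : Fin (m + 2) →₀ ℕ) : Fin (m + 2) →₀ ℕ :=
  d - x1xmExp m d • (varExp (m + 2) 1 + varExp (m + 2) m) +
    x1xmExp m d • (varExp (m + 2) (m + 1) + varExp (m + 2) (m + 2))

lemma x1xmExp_add_z (hm : 1 ≤ m) (d : Fin (m + 2) →₀ ℕ) :
    x1xmExp m (d + varExp (m + 2) (m + 1)) = x1xmExp m d := by
  simp only [x1xmExp, expAt_add, expAt_varExp]
  grind

lemma x1xmExp_add_zT (hm : 1 ≤ m) (d : Fin (m + 2) →₀ ℕ) :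
    x1xmExp m (d + varExp (m + 2) (m + 1) + varExp (m + 2) (m + 2)) = x1xmExp m d := by
  simp only [x1xmExp, expAt_add, expAt_varExp]
  grind

lemma x1xmExp_add_x1xm (hm : 2 ≤ m) (d : Fin (m + 2) →₀ ℕ) :
    x1xmExp m (d + varExp (m + 2) 1 + varExp (m + 2) m) = x1xmExp m d + 1 := by
  simp only [x1xmExp, expAt_add, expAt_varExp]
  grind

lemma swapExp_add_z (hm : 1 ≤ m) (d : Fin (m + 2) →₀ ℕ) :
    swapExp m (d + varExp (m + 2) (m + 1)) = swapExp m d + varExp (m + 2) (m + 1) := by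
  have h₁ : x1xmExp m d ≤ expAt d 1 := min_le_left _ _
  have h₂ : x1xmExp m d ≤ expAt d m := min_le_right _ _
  refine ext_expAt fun t => ?_
  simp only [swapExp, x1xmExp_add_z hm, expAt_add, expAt_tsub, expAt_smul, expAt_varExp]
  grind

lemma swapExp_add_zT (hm : 2 ≤ m) (d : Fin (m + 2) →₀ ℕ) :
    swapExp m (d + varExp (m + 2) (m + 1) + varExp (m + 2) (m + 2)) =
      swapExp m (d + varExp (m + 2) 1 + varExp (m + 2) m) := by
  have h₁ : x1xmExp m d ≤ expAt d 1 := min_le_left _ _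
  have h₂ : x1xmExp m d ≤ expAt d m := min_le_right _ _
  refine ext_expAt fun t => ?_
  simp only [swapExp, x1xmExp_add_zT (one_le_two.trans hm), x1xmExp_add_x1xm hm, expAt_add,
    expAt_tsub, expAt_smul, expAt_varExp]
  grind

variable (k : Type*) [Field k]

open Classical in
/-- The normal form of `x^d` modulo `Q`. -/
noncomputable def normalFormMonomial (m : ℕ) (d : Fin (m + 2) →₀ ℕ) :
    MvPolynomial (Fin (m + 2)) k :=
  if IsNonface m d then 0 else monomial (swapExp m d) 1

noncomputable def normalForm (m : ℕ) :
    MvPolynomial (Fin (m + 2)) k →ₗ[k] MvPolynomial (Fin (m + 2)) k :=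
  (basisMonomials (Fin (m + 2)) k).constr k (normalFormMonomial k m)

/-- The largest ideal contained in the kernel of `normalForm`. -/
noncomputable def normalFormKerIdeal (m : ℕ) : Ideal (MvPolynomial (Fin (m + 2)) k) where
  carrier := {f | ∀ g, normalForm k m (g * f) = 0}
  add_mem' {f f'} hf hf' g := by rw [mul_add, map_add, hf g, hf' g, add_zero]
  zero_mem' g := by rw [mul_zero, map_zero]
  smul_mem' c f hf g := by rw [smul_eq_mul, ← mul_assoc]; exact hf (g * c)

variable {k}

lemma normalForm_monomial (d : Fin (m + 2) →₀ ℕ) (c : k) :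
    normalForm k m (monomial d c) = c • normalFormMonomial k m d := by
  rw [monomial_eq_smul, map_smul, normalForm]
  exact congrArg (c • ·) ((basisMonomials (Fin (m + 2)) k).constr_basis k _ d)

lemma normalFormMonomial_add_z (hm : 1 ≤ m) (d : Fin (m + 2) →₀ ℕ) :
    normalFormMonomial k m (d + varExp (m + 2) (m + 1)) =
      Xv k (m + 2) (m + 1) * normalFormMonomial k m d := by
  unfold normalFormMonomial
  by_cases h : IsNonface m d
  · rw [if_pos ((isNonface_add_z_iff d).mpr h), if_pos h, mul_zero]
  · rw [if_neg (mt (isNonface_add_z_iff d).mp h), if_neg h, swapExp_add_z hm, mul_comm,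
      monomial_mul_Xv _ _ (by omega) (by omega)]

lemma normalFormMonomial_add_zT (hm : 4 ≤ m) (d : Fin (m + 2) →₀ ℕ) :
    normalFormMonomial k m (d + varExp (m + 2) (m + 1) + varExp (m + 2) (m + 2)) =
      normalFormMonomial k m (d + varExp (m + 2) 1 + varExp (m + 2) m) := by
  have h := (isNonface_add_zT_iff d).trans (isNonface_add_x1xm_iff hm d).symm
  unfold normalFormMonomial
  by_cases hd : IsNonface m (d + varExp (m + 2) 1 + varExp (m + 2) m)
  · rw [if_pos (h.mpr hd), if_pos hd]
  · rw [if_neg (mt h.mp hd), if_neg hd, swapExp_add_zT (by omega)]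

lemma mem_normalFormKerIdeal_of_monomial_mul {f : MvPolynomial (Fin (m + 2)) k}
    (h : ∀ d, normalForm k m (monomial d 1 * f) = 0) : f ∈ normalFormKerIdeal k m := by
  intro g
  induction g using MvPolynomial.induction_on' with
  | monomial d c =>
    rw [monomial_eq_smul, smul_mul_assoc, map_smul, h, smul_zero]
  | add p q hp hq => rw [add_mul, map_add, hp, hq, add_zero]

lemma idealQ_le_normalFormKerIdeal (hm : 4 ≤ m) : idealQ k m ≤ normalFormKerIdeal k m := by
  refine idealQ_le_iff.mpr ⟨fun s t hst => ?_, fun t ht₁ ht₂ => ?_, ?_⟩ <;>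
    refine mem_normalFormKerIdeal_of_monomial_mul fun d => ?_
  · obtain ⟨hs, hst', ht, -⟩ := id hst
    rw [← mul_assoc, monomial_mul_Xv _ _ hs (by omega), monomial_mul_Xv _ _ (by omega) (by omega),
      normalForm_monomial, normalFormMonomial, if_pos, smul_zero]
    refine Or.inl ⟨s, t, hst, ?_, ?_⟩ <;> simp only [expAt_add_varExp_pos_iff, and_true] <;> omega
  · rw [← mul_assoc, monomial_mul_Xv _ _ (by omega) le_rfl,
      monomial_mul_Xv _ _ (by omega) (by omega), normalForm_monomial, normalFormMonomial, if_pos,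
      smul_zero]
    refine Or.inr ⟨?_, t, ht₁, ht₂, ?_⟩ <;> simp only [expAt_add_varExp_pos_iff, and_true] <;> omega
  · rw [mul_sub, ← mul_assoc, ← mul_assoc, monomial_mul_Xv _ _ (by omega) (by omega),
      monomial_mul_Xv _ _ (by omega) le_rfl, monomial_mul_Xv _ _ le_rfl (by omega),
      monomial_mul_Xv _ _ (by omega) (by omega), map_sub, normalForm_monomial, normalForm_monomial,
      normalFormMonomial_add_zT hm, sub_self]

lemma monomial_mem_idealQ_of_isNonface {d : Fin (m + 2) →₀ ℕ} (h : IsNonface m d) (c : k) :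
    monomial d c ∈ idealQ k m := by
  rcases h with ⟨s, t, hst, hs, ht⟩ | ⟨hT, t, ht₁, ht₂, ht⟩
  · obtain ⟨hs₁, hst', htm, -⟩ := id hst
    exact Ideal.mem_of_dvd _ (Xv_mul_Xv_dvd_monomial c hs₁ (by omega) (by omega) hs ht)
      (Xv_mul_Xv_mem_idealQ hst)
  · refine Ideal.mem_of_dvd _ (Xv_mul_Xv_dvd_monomial c (by omega) (by omega) le_rfl ht hT) ?_
    rw [mul_comm]
    exact T_mul_Xv_mem_idealQ ht₁ ht₂

lemma monomial_sub_monomial_swapExp_mem (hm : 2 ≤ m) (d : Fin (m + 2) →₀ ℕ) :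
    monomial d 1 - monomial (swapExp m d) 1 ∈ idealQ k m := by
  set e := x1xmExp m d
  have hle : e • (varExp (m + 2) 1 + varExp (m + 2) m) ≤ d := by
    have h₁ : e ≤ expAt d 1 := min_le_left _ _
    have h₂ : e ≤ expAt d m := min_le_right _ _
    refine le_of_expAt fun t => ?_
    simp only [expAt_smul, expAt_add, expAt_varExp]
    grind
  have hpow (s t : ℕ) : monomial (e • (varExp (m + 2) s + varExp (m + 2) t)) (1 : k) =
      (monomial (varExp (m + 2) s) 1 * monomial (varExp (m + 2) t) 1) ^ e := by
    rw [monomial_mul, monomial_pow, one_mul, one_pow]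
  have hdvd := sub_dvd_pow_sub_pow
    (monomial (varExp (m + 2) 1) (1 : k) * monomial (varExp (m + 2) m) 1)
    (monomial (varExp (m + 2) (m + 1)) 1 * monomial (varExp (m + 2) (m + 2)) 1) e
  have hbin := binomial_mem_idealQ (k := k) (m := m)
  simp (disch := omega) only [Xv_eq_monomial] at hbin
  rw [← neg_sub] at hbin
  -- with `r = d - e • (x_1 x_m)`, the difference is `x^r ((x_1 x_m)^e - (zT)^e)`
  rw [swapExp]
  nth_rewrite 1 [← tsub_add_cancel_of_le hle]
  rw [← mul_one (1 : k), ← monomial_mul, ← monomial_mul, hpow, hpow, ← mul_sub]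
  exact Ideal.mul_mem_left _ _ (Ideal.mem_of_dvd _ hdvd (neg_mem_iff.mp hbin))

lemma sub_normalForm_mem (hm : 2 ≤ m) (f : MvPolynomial (Fin (m + 2)) k) :
    f - normalForm k m f ∈ idealQ k m := by
  induction f using MvPolynomial.induction_on' with
  | monomial d c =>
    rw [normalForm_monomial, normalFormMonomial]
    split_ifs with h
    · rw [smul_zero, sub_zero]
      exact monomial_mem_idealQ_of_isNonface h c
    · rw [monomial_eq_smul d c, ← smul_sub]
      exact Submodule.smul_of_tower_mem _ c (monomial_sub_monomial_swapExp_mem hm d)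
  | add p q hp hq =>
    rw [map_add, add_sub_add_comm]
    exact add_mem hp hq

theorem normalForm_eq_zero_iff (hm : 4 ≤ m) {f : MvPolynomial (Fin (m + 2)) k} :
    normalForm k m f = 0 ↔ f ∈ idealQ k m := by
  refine ⟨fun h => ?_, fun h => ?_⟩
  · simpa [h] using sub_normalForm_mem (by omega) f
  · simpa using idealQ_le_normalFormKerIdeal hm h 1

lemma normalForm_z_mul (hm : 1 ≤ m) (f : MvPolynomial (Fin (m + 2)) k) :
    normalForm k m (Xv k (m + 2) (m + 1) * f) = Xv k (m + 2) (m + 1) * normalForm k m f := by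
  induction f using MvPolynomial.induction_on' with
  | monomial d c =>
    rw [mul_comm, monomial_mul_Xv _ _ (by omega) (by omega), normalForm_monomial,
      normalForm_monomial, normalFormMonomial_add_z hm, mul_smul_comm]
  | add p q hp hq => rw [mul_add, map_add, map_add, hp, hq, mul_add]

theorem Xv_z_mem_nonZeroDivisors (hm : 4 ≤ m) :
    Ideal.Quotient.mk (idealQ k m) (Xv k (m + 2) (m + 1)) ∈
      nonZeroDivisors (MvPolynomial (Fin (m + 2)) k ⧸ idealQ k m) := by
  rw [mem_nonZeroDivisors_iff_right]
  intro y hy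
  obtain ⟨f, rfl⟩ := Ideal.Quotient.mk_surjective y
  rw [← map_mul, Ideal.Quotient.eq_zero_iff_mem, mul_comm, ← normalForm_eq_zero_iff hm,
    normalForm_z_mul (by omega), mul_eq_zero] at hy
  rw [Ideal.Quotient.eq_zero_iff_mem, ← normalForm_eq_zero_iff hm]
  refine hy.resolve_left ?_
  rw [Xv_eq_monomial (by omega) (by omega), monomial_eq_zero]
  exact one_ne_zero

end NormalForm

section DeleteVariable

variable {k : Type*} [Field k] {n : ℕ}

lemma rename_succAbove_Xv_of_le (p : Fin (n + 1)) {t : ℕ} (h₁ : 1 ≤ t) (h₂ : t ≤ p) :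
    rename p.succAbove (Xv k n t) = Xv k (n + 1) t := by
  have ht : t ≤ n := by omega
  have hlt : Fin.castSucc ⟨t - 1, by omega⟩ < p := by
    rw [Fin.lt_def]
    show t - 1 < p
    omega
  rw [Xv, Xv, dif_pos ⟨h₁, ht⟩, dif_pos ⟨h₁, by omega⟩, rename_X,
    Fin.succAbove_of_castSucc_lt _ _ hlt]
  rfl

lemma rename_succAbove_Xv_of_lt (p : Fin (n + 1)) {t : ℕ} (h₁ : p < t) (h₂ : t ≤ n) :
    rename p.succAbove (Xv k n t) = Xv k (n + 1) (t + 1) := by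
  have hle : p ≤ Fin.castSucc ⟨t - 1, by omega⟩ := by
    rw [Fin.le_def]
    show (p : ℕ) ≤ t - 1
    omega
  rw [Xv, Xv, dif_pos ⟨by omega, h₂⟩, dif_pos ⟨by omega, by omega⟩, rename_X,
    Fin.succAbove_of_le_castSucc _ _ hle]
  congr 1
  ext
  show t - 1 + 1 = t + 1 - 1
  omega

lemma killCompl_succAbove_X_self (p : Fin (n + 1)) :
    killCompl (R := k) (Fin.succAbove_right_injective (p := p)) (X p) = 0 := by
  rw [killCompl, aeval_X, dif_neg]
  rintro ⟨i, hi⟩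
  exact Fin.succAbove_ne p i hi

lemma sub_rename_killCompl_mem_span_X (p : Fin (n + 1)) (f : MvPolynomial (Fin (n + 1)) k) :
    f - rename p.succAbove (killCompl (Fin.succAbove_right_injective (p := p)) f) ∈
      Ideal.span {X p} := by
  rw [← Ideal.Quotient.eq, ← Ideal.Quotient.mkₐ_eq_mk k, ← AlgHom.comp_apply, ← AlgHom.comp_apply]
  refine DFunLike.congr_fun (algHom_ext fun i => Fin.succAboveCases p ?_ (fun j => ?_) i) f
  · simp only [AlgHom.comp_apply, killCompl_succAbove_X_self, map_zero, Ideal.Quotient.mkₐ_eq_mk]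
    exact Ideal.Quotient.eq_zero_iff_mem.mpr (Ideal.mem_span_singleton_self (X p))
  · rw [AlgHom.comp_apply, AlgHom.comp_apply, ← rename_X (R := k) p.succAbove j,
      killCompl_rename_app]

end DeleteVariable

section QuotientByZ

variable {k : Type*} [Field k] {m : ℕ}

/-- The (`0`-based) position of `z` among the variables of `k[x_1, …, x_m, z, T]`. -/
def zIndex (m : ℕ) : Fin (m + 2) := ⟨m, by omega⟩

lemma Xv_z_eq_X : Xv k (m + 2) (m + 1) = X (zIndex m) := by
  rw [Xv, dif_pos ⟨by omega, by omega⟩]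
  rfl

variable (k m) in
/-- The specialization `z ↦ 0`, `T ↦ x_{m+1}` of `k[x_1, …, x_m, z, T]` onto
`k[x_1, …, x_{m+1}]`. -/
noncomputable def specializeZ : MvPolynomial (Fin (m + 2)) k →ₐ[k] MvPolynomial (Fin (m + 1)) k :=
  killCompl (Fin.succAbove_right_injective (p := zIndex m))

lemma specializeZ_rename (f : MvPolynomial (Fin (m + 1)) k) :
    specializeZ k m (rename (zIndex m).succAbove f) = f :=
  killCompl_rename_app _ f

lemma specializeZ_Xv_of_le {t : ℕ} (h₁ : 1 ≤ t) (h₂ : t ≤ m) :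
    specializeZ k m (Xv k (m + 2) t) = Xv k (m + 1) t := by
  rw [← rename_succAbove_Xv_of_le (zIndex m) h₁ h₂, specializeZ_rename]

lemma specializeZ_Xv_z : specializeZ k m (Xv k (m + 2) (m + 1)) = 0 := by
  rw [Xv_z_eq_X]
  exact killCompl_succAbove_X_self _

lemma specializeZ_Xv_T : specializeZ k m (Xv k (m + 2) (m + 2)) = Xv k (m + 1) (m + 1) := by
  rw [← rename_succAbove_Xv_of_lt (zIndex m) (show m < m + 1 by omega) le_rfl,
    specializeZ_rename]

lemma idealQ_le_comap_specializeZ (hm : 3 ≤ m) :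
    idealQ k m ≤ (polygonIdeal k (m + 1) (m + 1)).comap (specializeZ k m) := by
  refine idealQ_le_iff.mpr ⟨fun s t hst => ?_, fun t ht₁ ht₂ => ?_, ?_⟩ <;> rw [Ideal.mem_comap]
  · obtain ⟨hs, hst', ht, -⟩ := id hst
    rw [map_mul, specializeZ_Xv_of_le hs (by omega), specializeZ_Xv_of_le (by omega) ht]
    exact Xv_mul_Xv_mem_polygonIdeal ⟨hs, hst', by omega, by omega⟩
  · rw [map_mul, specializeZ_Xv_T, specializeZ_Xv_of_le (by omega) (by omega), mul_comm]
    exact Xv_mul_Xv_mem_polygonIdeal ⟨by omega, by omega, le_rfl, by omega⟩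
  · rw [map_sub, map_mul, map_mul, specializeZ_Xv_z, zero_mul, zero_sub,
      specializeZ_Xv_of_le le_rfl (by omega), specializeZ_Xv_of_le (by omega) le_rfl, neg_mem_iff]
    exact Xv_mul_Xv_mem_polygonIdeal ⟨le_rfl, by omega, by omega, by omega⟩

lemma polygonIdeal_le_comap_rename (hm : 3 ≤ m) :
    polygonIdeal k (m + 1) (m + 1) ≤
      (idealQ k m ⊔ Ideal.span {Xv k (m + 2) (m + 1)}).comap (rename (zIndex m).succAbove) := by
  refine polygonIdeal_le_iff.mpr fun s t ⟨hs, hst, ht, hne⟩ => ?_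
  rw [Ideal.mem_comap, map_mul, rename_succAbove_Xv_of_le _ hs (show s ≤ m by omega)]
  obtain htm | rfl : t ≤ m ∨ t = m + 1 := by omega
  · rw [rename_succAbove_Xv_of_le _ (by omega) htm]
    by_cases h1m : s = 1 ∧ t = m
    · -- `x_1 x_m = zT - (zT - x_1 x_m)`
      rw [h1m.1, h1m.2]
      have h := sub_mem (Ideal.mem_sup_right (Ideal.mul_mem_right (Xv k (m + 2) (m + 2)) _
        (Ideal.mem_span_singleton_self (Xv k (m + 2) (m + 1)))))
        (Ideal.mem_sup_left (binomial_mem_idealQ (k := k) (m := m)))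
      rwa [sub_sub_cancel] at h
    · exact Ideal.mem_sup_left (Xv_mul_Xv_mem_idealQ ⟨hs, hst, htm, h1m⟩)
  · rw [rename_succAbove_Xv_of_lt _ (show m < m + 1 by omega) le_rfl, mul_comm]
    exact Ideal.mem_sup_left (T_mul_Xv_mem_idealQ (by omega) (by omega))

lemma ker_mk_comp_specializeZ (hm : 3 ≤ m) :
    RingHom.ker ((Ideal.Quotient.mkₐ k (polygonIdeal k (m + 1) (m + 1))).comp (specializeZ k m)) =
      idealQ k m ⊔ Ideal.span {Xv k (m + 2) (m + 1)} := by
  ext f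
  rw [RingHom.mem_ker, AlgHom.comp_apply, Ideal.Quotient.mkₐ_eq_mk, Ideal.Quotient.eq_zero_iff_mem,
    ← Ideal.mem_comap]
  refine ⟨fun hf => ?_, fun hf => ?_⟩
  · rw [← sub_add_cancel f (rename (zIndex m).succAbove (specializeZ k m f))]
    refine add_mem (Ideal.mem_sup_right ?_) (polygonIdeal_le_comap_rename hm hf)
    rw [Xv_z_eq_X]
    exact sub_rename_killCompl_mem_span_X _ f
  · refine sup_le (idealQ_le_comap_specializeZ hm) ?_ hf
    rw [Ideal.span_le, Set.singleton_subset_iff, SetLike.mem_coe, Ideal.mem_comap,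
      specializeZ_Xv_z]
    exact zero_mem _

variable (k) in
noncomputable def quotientSpanZEquiv (hm : 3 ≤ m) :
    ((MvPolynomial (Fin (m + 2)) k ⧸ idealQ k m) ⧸
        Ideal.span {Ideal.Quotient.mk (idealQ k m) (Xv k (m + 2) (m + 1))}) ≃ₐ[k]
      MvPolynomial (Fin (m + 1)) k ⧸ polygonIdeal k (m + 1) (m + 1) :=
  (Ideal.quotientEquivAlgOfEq k (by rw [Ideal.map_span, Set.image_singleton]; rfl)).trans <|
    (DoubleQuot.quotQuotEquivQuotSupₐ k _ _).trans <|
      (Ideal.quotientEquivAlgOfEq k (ker_mk_comp_specializeZ hm).symm).trans <|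
        Ideal.quotientKerAlgEquivOfSurjective <| (Ideal.Quotient.mkₐ_surjective k _).comp
          fun f => ⟨_, specializeZ_rename f⟩

end QuotientByZ

end CyclicUnprojection

/-- Unprojection for `d = 2`. Let `m ≥ 4`. In `k[x_1,…,x_m,z,T]` (with `z, T` the last two
variables) let `Q = I_{2,1,m−1} + I_{2,2,m} + (T x_2, …, T x_{m−1}) + (zT − x_1 x_m)` and
`S = k[x_1,…,x_m,z,T]/Q`. Then the image of `z` in `S` is a non-zero-divisor, and
`S/(z) ≅ k[x_1,…,x_{m+1}]/(I_{2,1,m} + I_{2,2,m+1}) = k[Δ(2,m+1)]` as `k`-algebras. -/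
theorem unprojection_cyclic_two (k : Type*) [Field k] (m : ℕ) (hm : 4 ≤ m)
    (Q : Ideal (MvPolynomial (Fin (m + 2)) k))
    (hQ : Q = idealI k (m + 2) 2 1 (m - 1) + idealI k (m + 2) 2 2 m +
      Ideal.span {Xv k (m + 2) (m + 2)} * idealI k (m + 2) 1 2 (m - 1) +
      Ideal.span {Xv k (m + 2) (m + 1) * Xv k (m + 2) (m + 2) -
        Xv k (m + 2) 1 * Xv k (m + 2) m}) :
    Ideal.Quotient.mk Q (Xv k (m + 2) (m + 1)) ∈
      nonZeroDivisors (MvPolynomial (Fin (m + 2)) k ⧸ Q) ∧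
    Nonempty (((MvPolynomial (Fin (m + 2)) k ⧸ Q) ⧸
        Ideal.span {Ideal.Quotient.mk Q (Xv k (m + 2) (m + 1))}) ≃ₐ[k]
      (MvPolynomial (Fin (m + 1)) k ⧸
        (idealI k (m + 1) 2 1 m + idealI k (m + 1) 2 2 (m + 1)))) := by
  subst hQ
  exact ⟨CyclicUnprojection.Xv_z_mem_nonZeroDivisors hm,
    ⟨CyclicUnprojection.quotientSpanZEquiv k (by omega)⟩⟩
end

section
/- Let k be a field and d an even integer with d ≥ 2. In k[x_1,…,x_{d+1},z,T] let Q be the ideal generated by x_1x_2⋯x_{d+1}, by T·∏_{i=1}^{d/2} x_{2i}, and by (zT − x_1x_{d+1})·∏_{i=1}^{(d/2)−1} x_{2i+1} (where an empty product equals 1), and set S = k[x_1,…,x_{d+1},z,T]/Q. Then the image of z in S is a non-zero-divisor of S, and S/(z) is isomorphic as a k-algebra to k[x_1,…,x_{d+2}]/(∏_{i=0}^{d/2} x_{2i+1}, ∏_{i=1}^{(d/2)+1} x_{2i}), which is the Stanley–Reisner ring k[Δ(d,d+2)] of the boundary complex of the d-dimensional cyclic polytope with d+2 vertices. -/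
section

open Finset Polynomial

section ProdIcc

variable {M : Type*} [CommMonoid M]

theorem prod_Icc_one_eq_prod_odd_mul_prod_even (u : ℕ → M) (r : ℕ) :
    ∏ i ∈ Icc 1 (2 * r + 1), u i = (∏ i ∈ Icc 0 r, u (2 * i + 1)) * ∏ i ∈ Icc 1 r, u (2 * i) := by
  induction r with
  | zero => simp
  | succ r ih =>
    rw [show 2 * (r + 1) + 1 = 2 * r + 1 + 1 + 1 by ring, prod_Icc_succ_top (by omega),
      prod_Icc_succ_top (by omega), ih, prod_Icc_succ_top (by omega), prod_Icc_succ_top (by omega),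
      show 2 * (r + 1) = 2 * r + 1 + 1 by ring]
    simp only [mul_assoc, mul_comm, mul_left_comm]

theorem prod_Icc_zero_eq_mul_mul_prod_Icc_one (f : ℕ → M) {r : ℕ} (hr : 1 ≤ r) :
    ∏ i ∈ Icc 0 r, f i = f 0 * f r * ∏ i ∈ Icc 1 (r - 1), f i := by
  obtain ⟨s, rfl⟩ : ∃ s, r = s + 1 := ⟨r - 1, by omega⟩
  rw [prod_Icc_succ_top (by omega), Icc_eq_cons_Ioc (Nat.zero_le s), prod_cons,
    ← Icc_add_one_left_eq_Ioc, zero_add, Nat.add_sub_cancel]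
  ac_rfl

end ProdIcc

namespace MvPolynomial

variable (R : Type*) [CommSemiring R] {n : ℕ}

/-- `R[x_0, …, x_n] ≃ R[x_0, …, x̂_i, …, x_n][x_i]`, the variables other than `x_i` keeping
their order. -/
noncomputable def finSuccEquivAt (i : Fin (n + 1)) :
    MvPolynomial (Fin (n + 1)) R ≃ₐ[R] (MvPolynomial (Fin n) R)[X] :=
  (renameEquiv R (finSuccEquiv' i)).trans (optionEquivLeft R (Fin n))

variable {R}

theorem finSuccEquivAt_X_self (i : Fin (n + 1)) :
    finSuccEquivAt R i (X i) = Polynomial.X := by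
  simp [finSuccEquivAt, optionEquivLeft_X_none]

theorem finSuccEquivAt_X_castSucc {i : Fin (n + 1)} {j : Fin n} (h : j.castSucc < i) :
    finSuccEquivAt R i (X j.castSucc) = Polynomial.C (X j) := by
  simp [finSuccEquivAt, finSuccEquiv'_below h, optionEquivLeft_X_some]

theorem finSuccEquivAt_X_succ {i : Fin (n + 1)} {j : Fin n} (h : i ≤ j.castSucc) :
    finSuccEquivAt R i (X j.succ) = Polynomial.C (X j) := by
  simp [finSuccEquivAt, finSuccEquiv'_above h, optionEquivLeft_X_some]

end MvPolynomial

section Xv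

open MvPolynomial

variable {k : Type*} [Field k] {n s t : ℕ}

theorem Xv_eq_X (h1 : 1 ≤ t) (h2 : t ≤ n) : Xv k n t = X ⟨t - 1, by omega⟩ :=
  dif_pos ⟨h1, h2⟩

theorem Xv_ne_zero (h1 : 1 ≤ t) (h2 : t ≤ n) : Xv k n t ≠ 0 := by
  rw [Xv_eq_X h1 h2]
  exact X_ne_zero _

theorem isRelPrime_Xv (hs1 : 1 ≤ s) (hs2 : s ≤ n) (ht1 : 1 ≤ t) (ht2 : t ≤ n) (hst : s ≠ t) :
    IsRelPrime (Xv k n s) (Xv k n t) := by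
  rw [Xv_eq_X hs1 hs2, Xv_eq_X ht1 ht2, X_prime.irreducible.isRelPrime_iff_not_dvd, X_dvd_X,
    Fin.mk.injEq]
  omega

theorem finSuccEquivAt_Xv_of_le {i : Fin (n + 1)} (h1 : 1 ≤ t) (hti : t ≤ i) :
    finSuccEquivAt k i (Xv k (n + 1) t) = Polynomial.C (Xv k n t) := by
  rw [Xv_eq_X h1 (by omega), Xv_eq_X h1 (by omega)]
  exact finSuccEquivAt_X_castSucc (j := ⟨t - 1, by omega⟩)
    (Fin.lt_def.2 (by simp only [Fin.val_castSucc]; omega))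

theorem finSuccEquivAt_Xv_self (i : Fin (n + 1)) :
    finSuccEquivAt k i (Xv k (n + 1) (i + 1)) = Polynomial.X := by
  rw [Xv_eq_X (by omega) (by omega)]
  exact finSuccEquivAt_X_self i

theorem finSuccEquivAt_Xv_succ {i : Fin (n + 1)} (hit : (i : ℕ) < t) (htn : t ≤ n) :
    finSuccEquivAt k i (Xv k (n + 1) (t + 1)) = Polynomial.C (Xv k n t) := by
  have hj : (⟨t + 1 - 1, by omega⟩ : Fin (n + 1)) = Fin.succ ⟨t - 1, by omega⟩ :=
    Fin.ext (by simp only [Fin.val_succ]; omega)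
  rw [Xv_eq_X (by omega) (by omega), Xv_eq_X (by omega) htn, hj]
  exact finSuccEquivAt_X_succ (Fin.le_def.2 (by simp only [Fin.val_castSucc]; omega))

theorem finSuccEquivAt_prod_Xv {ι : Type*} {i : Fin (n + 1)} (s : Finset ι) (u : ι → ℕ)
    (hu : ∀ j ∈ s, 1 ≤ u j ∧ u j ≤ i) :
    finSuccEquivAt k i (∏ j ∈ s, Xv k (n + 1) (u j)) = Polynomial.C (∏ j ∈ s, Xv k n (u j)) := by
  rw [map_prod, map_prod]
  exact prod_congr rfl fun j hj ↦ finSuccEquivAt_Xv_of_le (hu j hj).1 (hu j hj).2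

end Xv

section Transport

variable {K R S : Type*} [CommSemiring K] [CommRing R] [CommRing S] [Algebra K R] [Algebra K S]
  (e : R ≃ₐ[K] S) {I : Ideal R} {J : Ideal S} {x : R} {y : S}

theorem mk_mem_nonZeroDivisors_of_algEquiv (hIJ : J = I.map e) (hxy : e x = y)
    (hy : Ideal.Quotient.mk J y ∈ nonZeroDivisors (S ⧸ J)) :
    Ideal.Quotient.mk I x ∈ nonZeroDivisors (R ⧸ I) :=
  mem_nonZeroDivisors_of_injective (Ideal.quotientEquivAlg I J e hIJ).injective <| by
    rwa [← hxy] at hy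

noncomputable def quotientSpanMkAlgEquiv (hIJ : J = I.map e) (hxy : e x = y) :
    ((R ⧸ I) ⧸ Ideal.span {Ideal.Quotient.mk I x}) ≃ₐ[K]
      ((S ⧸ J) ⧸ Ideal.span {Ideal.Quotient.mk J y}) :=
  Ideal.quotientEquivAlg _ _ (Ideal.quotientEquivAlg I J e hIJ) <| by
    rw [Ideal.map_span, Set.image_singleton, ← hxy]
    rfl

end Transport

section Unprojection

variable {A : Type*} [CommRing A] {g w m : A}

theorem mem_span_of_X_mul_mem_span (hg : g ∈ nonZeroDivisors A) (hm : ∀ b, g ∣ b * m → g ∣ b)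
    {p : A[X]} (hp : X * p ∈ Ideal.span {C g, X * C w - C m}) :
    p ∈ Ideal.span {C g, X * C w - C m} := by
  obtain ⟨a, b, hab⟩ := Ideal.mem_span_pair.1 hp
  have h0 : a.eval 0 * g = b.eval 0 * m := by
    have := congrArg (eval 0) hab
    simp only [eval_add, eval_mul, eval_sub, eval_X, eval_C] at this
    linear_combination this
  obtain ⟨c, hc⟩ := hm _ ⟨a.eval 0, by rw [← h0, mul_comm]⟩
  have ha : a.eval 0 = c * m :=
    sub_eq_zero.1 <| hg.2 _ <| by linear_combination h0 + m * hc
  obtain ⟨a', ha'⟩ : X ∣ a + C c * (X * C w - C m) := by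
    simp [X_dvd_iff, coeff_zero_eq_eval_zero, ha]
  obtain ⟨b', hb'⟩ : X ∣ b - C c * C g := by
    simp [X_dvd_iff, coeff_zero_eq_eval_zero, hc, mul_comm]
  refine Ideal.mem_span_pair.2 ⟨a', b', isRegular_X.left ?_⟩
  calc X * (a' * C g + b' * (X * C w - C m))
      = (a + C c * (X * C w - C m)) * C g + (b - C c * C g) * (X * C w - C m) := by
        rw [ha', hb']; ring
    _ = X * p := by rw [← hab]; ring

theorem mk_X_mem_nonZeroDivisors (hg : g ∈ nonZeroDivisors A) (hm : ∀ b, g ∣ b * m → g ∣ b) :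
    Ideal.Quotient.mk (Ideal.span {C g, X * C w - C m}) X ∈
      nonZeroDivisors (A[X] ⧸ Ideal.span {C g, X * C w - C m}) := by
  refine mem_nonZeroDivisors_iff_left.2 fun q hq ↦ ?_
  obtain ⟨p, rfl⟩ := Ideal.Quotient.mk_surjective q
  rw [← map_mul, Ideal.Quotient.eq_zero_iff_mem] at hq
  exact Ideal.Quotient.eq_zero_iff_mem.2 (mem_span_of_X_mul_mem_span hg hm hq)

variable (g w m) in
theorem span_sup_span_X_eq_comap :
    Ideal.span {C g, X * C w - C m} ⊔ Ideal.span {X} =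
      (Ideal.span {g, m}).comap (evalRingHom 0) := by
  have hmap : (Ideal.span {C g, X * C w - C m}).map (evalRingHom (0 : A)) =
      Ideal.span {g, m} := by
    rw [Ideal.map_span]
    simp [Set.image_insert_eq, Ideal.span_insert]
  rw [← hmap, Ideal.comap_map_of_surjective _ (eval_surjective 0), ← RingHom.ker_eq_comap_bot,
    ker_evalRingHom, map_zero, sub_zero]

noncomputable def quotientSpanMkXAlgEquiv :
    ((A[X] ⧸ Ideal.span {C g, X * C w - C m}) ⧸
        Ideal.span {Ideal.Quotient.mk (Ideal.span {C g, X * C w - C m}) X}) ≃ₐ[A]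
      A ⧸ Ideal.span {g, m} :=
  (Ideal.quotientEquivAlgOfEq A (by rw [Ideal.map_span, Set.image_singleton]; rfl)).trans <|
    (DoubleQuot.quotQuotEquivQuotSupₐ A _ (Ideal.span {X})).trans <|
    (Ideal.quotientEquivAlgOfEq A <| (span_sup_span_X_eq_comap g w m).trans <| by
      ext p; simp [Ideal.Quotient.eq_zero_iff_mem]).trans <|
    Ideal.quotientKerAlgEquivOfSurjective
      (f := (Ideal.Quotient.mkₐ A (Ideal.span {g, m})).comp (aeval 0)) <|
      (Ideal.Quotient.mkₐ_surjective A _).comp fun a ↦ ⟨C a, aeval_C _ _⟩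

variable {K R : Type*} [CommSemiring K] [CommRing R] [Algebra K R] [Algebra K A]
  (e : R ≃ₐ[K] A[X]) {Q : Ideal R} {z : R}

theorem mk_mem_nonZeroDivisors_of_map_eq_span (hQ : Q.map e = Ideal.span {C g, X * C w - C m})
    (hz : e z = X) (hg : g ∈ nonZeroDivisors A) (hm : ∀ b, g ∣ b * m → g ∣ b) :
    Ideal.Quotient.mk Q z ∈ nonZeroDivisors (R ⧸ Q) :=
  mk_mem_nonZeroDivisors_of_algEquiv e hQ.symm hz (mk_X_mem_nonZeroDivisors hg hm)

noncomputable def quotientSpanMkAlgEquivOfMapEqSpan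
    (hQ : Q.map e = Ideal.span {C g, X * C w - C m}) (hz : e z = X) :
    ((R ⧸ Q) ⧸ Ideal.span {Ideal.Quotient.mk Q z}) ≃ₐ[K] A ⧸ Ideal.span {g, m} :=
  (quotientSpanMkAlgEquiv e hQ.symm hz).trans (quotientSpanMkXAlgEquiv.restrictScalars K)

end Unprojection

section CyclicPolytope

variable (k : Type*) [Field k] (r : ℕ)

/-- `k[x_1, …, x_{2r+1}, z, T] ≃ k[x_1, …, x_{2r+2}][z]`, where `z = x_{2r+2}` and `T = x_{2r+3}`
on the left and `T` becomes `x_{2r+2}` on the right. -/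
noncomputable def polyEquivZ :
    MvPolynomial (Fin (r + r + 3)) k ≃ₐ[k] (MvPolynomial (Fin (r + r + 2)) k)[X] :=
  MvPolynomial.finSuccEquivAt k ⟨r + r + 1, by omega⟩

variable {k r}

theorem polyEquivZ_z : polyEquivZ k r (Xv k (r + r + 3) (r + r + 2)) = X :=
  finSuccEquivAt_Xv_self (n := r + r + 2) ⟨r + r + 1, by omega⟩

theorem polyEquivZ_T :
    polyEquivZ k r (Xv k (r + r + 3) (r + r + 3)) = C (Xv k (r + r + 2) (r + r + 2)) :=
  finSuccEquivAt_Xv_succ (n := r + r + 2) (i := ⟨r + r + 1, by omega⟩) (Nat.lt_succ_self _) le_rfl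

theorem polyEquivZ_Xv {t : ℕ} (h1 : 1 ≤ t) (h2 : t ≤ r + r + 1) :
    polyEquivZ k r (Xv k (r + r + 3) t) = C (Xv k (r + r + 2) t) :=
  finSuccEquivAt_Xv_of_le (n := r + r + 2) (i := ⟨r + r + 1, by omega⟩) h1 h2

theorem polyEquivZ_prod_Xv {ι : Type*} (s : Finset ι) (u : ι → ℕ)
    (hu : ∀ j ∈ s, 1 ≤ u j ∧ u j ≤ r + r + 1) :
    polyEquivZ k r (∏ j ∈ s, Xv k (r + r + 3) (u j)) = C (∏ j ∈ s, Xv k (r + r + 2) (u j)) :=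
  finSuccEquivAt_prod_Xv (n := r + r + 2) (i := ⟨r + r + 1, by omega⟩) s u hu

theorem polyEquivZ_prod_Icc :
    polyEquivZ k r (∏ i ∈ Icc 1 (r + r + 1), Xv k (r + r + 3) i) =
      C ((∏ i ∈ Icc 0 r, Xv k (r + r + 2) (2 * i + 1)) *
        ∏ i ∈ Icc 1 r, Xv k (r + r + 2) (2 * i)) := by
  rw [polyEquivZ_prod_Xv _ _ fun i hi ↦ by simp only [mem_Icc] at hi; omega,
    show r + r + 1 = 2 * r + 1 by ring, prod_Icc_one_eq_prod_odd_mul_prod_even]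

theorem polyEquivZ_T_mul_prod_even :
    polyEquivZ k r (Xv k (r + r + 3) (r + r + 3) * ∏ i ∈ Icc 1 r, Xv k (r + r + 3) (2 * i)) =
      C (∏ i ∈ Icc 1 (r + 1), Xv k (r + r + 2) (2 * i)) := by
  rw [map_mul, polyEquivZ_T, polyEquivZ_prod_Xv _ _ fun i hi ↦ by simp only [mem_Icc] at hi; omega,
    prod_Icc_succ_top (by omega), show 2 * (r + 1) = r + r + 2 by ring, map_mul, mul_comm]

theorem polyEquivZ_unprojection_equation (hr : 1 ≤ r) :
    polyEquivZ k r ((Xv k (r + r + 3) (r + r + 2) * Xv k (r + r + 3) (r + r + 3) -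
        Xv k (r + r + 3) 1 * Xv k (r + r + 3) (r + r + 1)) *
        ∏ i ∈ Icc 1 (r - 1), Xv k (r + r + 3) (2 * i + 1)) =
      X * C (Xv k (r + r + 2) (r + r + 2) * ∏ i ∈ Icc 1 (r - 1), Xv k (r + r + 2) (2 * i + 1)) -
        C (∏ i ∈ Icc 0 r, Xv k (r + r + 2) (2 * i + 1)) := by
  rw [prod_Icc_zero_eq_mul_mul_prod_Icc_one _ hr, map_mul, map_sub, map_mul, map_mul,
    polyEquivZ_z, polyEquivZ_T, polyEquivZ_Xv le_rfl (by omega), polyEquivZ_Xv (by omega) le_rfl,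
    polyEquivZ_prod_Xv _ _ fun i hi ↦ by simp only [mem_Icc] at hi; omega,
    show 2 * r + 1 = r + r + 1 by ring]
  simp only [map_mul]
  ring

theorem map_polyEquivZ_ideal (hr : 1 ≤ r) :
    (Ideal.span {∏ i ∈ Icc 1 (r + r + 1), Xv k (r + r + 3) i} +
      Ideal.span {Xv k (r + r + 3) (r + r + 3) * ∏ i ∈ Icc 1 r, Xv k (r + r + 3) (2 * i)} +
      Ideal.span {(Xv k (r + r + 3) (r + r + 2) * Xv k (r + r + 3) (r + r + 3) -
          Xv k (r + r + 3) 1 * Xv k (r + r + 3) (r + r + 1)) *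
        ∏ i ∈ Icc 1 (r - 1), Xv k (r + r + 3) (2 * i + 1)}).map (polyEquivZ k r) =
      Ideal.span {C (∏ i ∈ Icc 1 (r + 1), Xv k (r + r + 2) (2 * i)),
        X * C (Xv k (r + r + 2) (r + r + 2) * ∏ i ∈ Icc 1 (r - 1), Xv k (r + r + 2) (2 * i + 1)) -
          C (∏ i ∈ Icc 0 r, Xv k (r + r + 2) (2 * i + 1))} := by
  simp only [Submodule.add_eq_sup, Ideal.map_sup, Ideal.map_span, Set.image_singleton,
    polyEquivZ_prod_Icc, polyEquivZ_T_mul_prod_even, polyEquivZ_unprojection_equation hr]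
  rw [sup_assoc, ← Ideal.span_insert, sup_eq_right, Ideal.span_singleton_le_iff_mem,
    Ideal.mem_span_pair, prod_Icc_succ_top (by omega), show 2 * (r + 1) = r + r + 2 by ring]
  refine ⟨X * C (∏ i ∈ Icc 1 (r - 1), Xv k (r + r + 2) (2 * i + 1)),
    -C (∏ i ∈ Icc 1 r, Xv k (r + r + 2) (2 * i)), ?_⟩
  simp only [map_mul]
  ring

variable (k r)

theorem prod_even_mem_nonZeroDivisors :
    ∏ i ∈ Icc 1 (r + 1), Xv k (r + r + 2) (2 * i) ∈
      nonZeroDivisors (MvPolynomial (Fin (r + r + 2)) k) := by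
  refine mem_nonZeroDivisors_of_ne_zero <| prod_ne_zero_iff.2 fun i hi ↦ ?_
  simp only [mem_Icc] at hi
  exact Xv_ne_zero (by omega) (by omega)

theorem isRelPrime_prod_even_prod_odd :
    IsRelPrime (∏ i ∈ Icc 1 (r + 1), Xv k (r + r + 2) (2 * i))
      (∏ i ∈ Icc 0 r, Xv k (r + r + 2) (2 * i + 1)) :=
  IsRelPrime.prod_left fun i hi ↦ IsRelPrime.prod_right fun j hj ↦ by
    simp only [mem_Icc] at hi hj
    exact isRelPrime_Xv (by omega) (by omega) (by omega) (by omega) (by omega)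

end CyclicPolytope

end

/-- Unprojection for `d` even, `m = d + 1`. In `k[x_1,…,x_{d+1},z,T]` (with `z, T` the last
two variables) let `Q` be generated by `x_1 ⋯ x_{d+1}`, by `T·x_2x_4⋯x_d`, and by
`(zT − x_1x_{d+1})·x_3x_5⋯x_{d−1}` (empty products being `1`), and let
`S = k[x_1,…,x_{d+1},z,T]/Q`. Then the image of `z` in `S` is a non-zero-divisor, and
`S/(z) ≅ k[x_1,…,x_{d+2}]/(∏_{i=0}^{d/2} x_{2i+1}, ∏_{i=1}^{d/2+1} x_{2i}) = k[Δ(d,d+2)]`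
as `k`-algebras. -/
theorem unprojection_cyclic_even_initial (k : Type*) [Field k] (d : ℕ)
    (hd : Even d) (hd2 : 2 ≤ d)
    (Q : Ideal (MvPolynomial (Fin (d + 3)) k))
    (hQ : Q = Ideal.span {∏ i ∈ Finset.Icc 1 (d + 1), Xv k (d + 3) i} +
      Ideal.span {Xv k (d + 3) (d + 3) * ∏ i ∈ Finset.Icc 1 (d / 2), Xv k (d + 3) (2 * i)} +
      Ideal.span {(Xv k (d + 3) (d + 2) * Xv k (d + 3) (d + 3) -
          Xv k (d + 3) 1 * Xv k (d + 3) (d + 1)) *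
        ∏ i ∈ Finset.Icc 1 (d / 2 - 1), Xv k (d + 3) (2 * i + 1)}) :
    Ideal.Quotient.mk Q (Xv k (d + 3) (d + 2)) ∈
      nonZeroDivisors (MvPolynomial (Fin (d + 3)) k ⧸ Q) ∧
    Nonempty (((MvPolynomial (Fin (d + 3)) k ⧸ Q) ⧸
        Ideal.span {Ideal.Quotient.mk Q (Xv k (d + 3) (d + 2))}) ≃ₐ[k]
      (MvPolynomial (Fin (d + 2)) k ⧸
        (Ideal.span {∏ i ∈ Finset.Icc 0 (d / 2), Xv k (d + 2) (2 * i + 1)} +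
          Ideal.span {∏ i ∈ Finset.Icc 1 (d / 2 + 1), Xv k (d + 2) (2 * i)}))) := by
  obtain ⟨r, rfl⟩ := hd
  have hr : 1 ≤ r := by omega
  rw [show (r + r) / 2 = r by omega] at hQ ⊢
  have hQmap := hQ ▸ map_polyEquivZ_ideal (k := k) hr
  have hGM := isRelPrime_prod_even_prod_odd k r
  refine ⟨mk_mem_nonZeroDivisors_of_map_eq_span _ hQmap polyEquivZ_z
      (prod_even_mem_nonZeroDivisors k r) fun _ ↦ hGM.dvd_of_dvd_mul_right, ⟨?_⟩⟩
  refine (quotientSpanMkAlgEquivOfMapEqSpan _ hQmap polyEquivZ_z).trans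
    (Ideal.quotientEquivAlgOfEq k ?_)
  rw [Ideal.span_insert, sup_comm, Submodule.add_eq_sup]
end

section
/- Let k be a field, d an odd integer with d ≥ 3, and m an integer with d+1 < m; set a = (d+1)/2. Then the Stanley–Reisner ideal of Δ(d,m) in k[x_1,…,x_m] equals I_{a,2,m−1} + x_1x_m·I_{a−1,3,m−2}; equivalently, k[Δ(d,m)] is isomorphic as a k-algebra to k[x_1,…,x_m]/(I_{a,2,m−1} + x_1x_m·I_{a−1,3,m−2}). -/
/-!
Call a set sparse if it contains no two consecutive integers. Generators of
`I_{a,2,m-1}` are the monomials of sparse `a`-subsets of `[2, m-1]`, and those of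
`x_1x_m·I_{a-1,3,m-2}` the monomials of `{1, m} ∪ T` with `T` a sparse `(a-1)`-subset of
`[3, m-2]`; the points of `T` are isolated, hence odd contiguous subsets, so these sets are
non-faces. Conversely, a non-face `W` has `#W + (number of odd contiguous subsets) ≥ 2a`. A run
of `ℓ` consecutive points contains a sparse subset of size `⌈ℓ/2⌉`, the odd contiguous subsets
are exactly the odd runs not touching `1` or `m`, and the runs through `1` and `m` still give
`⌊ℓ/2⌋` points avoiding `1` and `m`. This yields a sparse `a`-subset of `W ∩ [2, m-1]` unless
both end runs have odd length, and in that case trimming them by one more point gives a sparse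
`(a-1)`-subset of `W ∩ [3, m-2]`.
-/

open Finset

namespace CyclicPolytope

def Sparse (S : Finset ℕ) : Prop := ∀ x ∈ S, x + 1 ∉ S

lemma Sparse.mono {S T : Finset ℕ} (hS : Sparse S) (hT : T ⊆ S) : Sparse T :=
  fun x hx hx1 => hS x (hT hx) (hT hx1)

section Separated

variable {S T : Finset ℕ}

lemma Sparse.union_of_add_two_le (hS : Sparse S) (hT : Sparse T)
    (hsep : ∀ x ∈ S, ∀ y ∈ T, x + 2 ≤ y) : Sparse (S ∪ T) := by
  intro x hx hx1
  rcases mem_union.1 hx with h | h <;> rcases mem_union.1 hx1 with h1 | h1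
  · exact hS x h h1
  · exact absurd (hsep x h _ h1) (by omega)
  · exact absurd (hsep _ h1 x h) (by omega)
  · exact hT x h h1

lemma card_union_of_add_two_le (hsep : ∀ x ∈ S, ∀ y ∈ T, x + 2 ≤ y) : #(S ∪ T) = #S + #T :=
  card_union_of_disjoint <| disjoint_left.2 fun x hS hT => by have := hsep x hS x hT; omega

end Separated

lemma exists_sparse_subset_Icc (p q : ℕ) : ∃ S ⊆ Icc p q, Sparse S ∧ q + 1 ≤ p + 2 * #S := by
  refine ⟨(range ((q + 2 - p) / 2)).image (p + 2 * ·), ?_, ?_, ?_⟩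
  · intro x hx
    obtain ⟨i, hi, rfl⟩ := mem_image.1 hx
    rw [mem_range] at hi
    exact mem_Icc.2 ⟨by omega, by omega⟩
  · intro x hx hx1
    obtain ⟨i, -, rfl⟩ := mem_image.1 hx
    obtain ⟨j, -, hj⟩ := mem_image.1 hx1
    omega
  · rw [card_image_of_injective _ fun i j hij => by omega, card_range]
    omega

/-- The maximal runs `{i, …, j}` of `V` of odd length; one starting at `0` is never counted,
since `0 - 1 = 0` in `ℕ`. -/
def oddRuns (V : Finset ℕ) : Finset (ℕ × ℕ) :=
  (V ×ˢ V).filter fun r =>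
    r.1 ≤ r.2 ∧ Icc r.1 r.2 ⊆ V ∧ r.1 - 1 ∉ V ∧ r.2 + 1 ∉ V ∧ Odd (r.2 - r.1 + 1)

section Runs

variable {V : Finset ℕ}

lemma eq_of_run_top {x j j' : ℕ} (hj : x ≤ j + 1) (hj' : x ≤ j' + 1) (hrun : Icc x j ⊆ V)
    (hrun' : Icc x j' ⊆ V) (htop : j + 1 ∉ V) (htop' : j' + 1 ∉ V) : j = j' := by
  by_contra hne
  rcases Nat.lt_or_gt_of_ne hne with h | h
  · exact htop (hrun' (mem_Icc.2 ⟨hj, h⟩))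
  · exact htop' (hrun (mem_Icc.2 ⟨hj', h⟩))

lemma exists_run_top {x : ℕ} (hx : x ∈ V) : ∃ j, x ≤ j ∧ Icc x j ⊆ V ∧ j + 1 ∉ V := by
  have hex : ∃ k, x + k + 1 ∉ V := ⟨V.sup id, fun h => by
    have := le_sup (f := id) h; dsimp only [id] at this; omega⟩
  refine ⟨x + Nat.find hex, by omega, fun y hy => ?_, Nat.find_spec hex⟩
  rw [mem_Icc] at hy
  obtain rfl | hxy := eq_or_lt_of_le hy.1
  · exact hx
  · have := Nat.find_min hex (m := y - x - 1) (by omega)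
    rwa [not_not, show x + (y - x - 1) + 1 = y by omega] at this

open Classical in
/-- Every other point of each run of `V`, counted down from its top. -/
noncomputable def evenTail (V : Finset ℕ) : Finset ℕ :=
  V.filter fun x => ∃ j, x ≤ j ∧ Icc x j ⊆ V ∧ j + 1 ∉ V ∧ Even (j - x)

lemma mem_evenTail {x : ℕ} :
    x ∈ evenTail V ↔ x ∈ V ∧ ∃ j, x ≤ j ∧ Icc x j ⊆ V ∧ j + 1 ∉ V ∧ Even (j - x) := by
  simp [evenTail]

lemma sparse_evenTail : Sparse (evenTail V) := by
  intro x hx hx1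
  obtain ⟨-, j, hxj, hrun, htop, heven⟩ := mem_evenTail.1 hx
  obtain ⟨-, j', hxj', hrun', htop', heven'⟩ := mem_evenTail.1 hx1
  have : j = j' := by
    refine eq_of_run_top (x := x + 1) (by omega) (by omega) ?_ hrun' htop htop'
    exact (Icc_subset_Icc_left (Nat.le_succ x)).trans hrun
  subst this
  rw [Nat.even_iff] at heven heven'
  omega

lemma succ_mem_evenTail {x : ℕ} (hx : x ∈ V) (hx' : x ∉ evenTail V) : x + 1 ∈ evenTail V := by
  obtain ⟨j, hxj, hrun, htop⟩ := exists_run_top hx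
  have hodd : ¬ Even (j - x) := fun h => hx' (mem_evenTail.2 ⟨hx, j, hxj, hrun, htop, h⟩)
  rw [Nat.even_iff] at hodd
  have hlt : x < j := by omega
  have hrun1 : Icc (x + 1) j ⊆ V := (Icc_subset_Icc_left (Nat.le_succ x)).trans hrun
  refine mem_evenTail.2 ⟨hrun1 (mem_Icc.2 ⟨le_rfl, hlt⟩), j, hlt, hrun1, htop, ?_⟩
  rw [Nat.even_iff]
  omega

lemma fst_mem_evenTail {r : ℕ × ℕ} (hr : r ∈ oddRuns V) : r.1 ∈ evenTail V := by
  obtain ⟨⟨hi, -⟩, hij, hrun, -, htop, hodd⟩ := by simpa [oddRuns] using hr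
  refine mem_evenTail.2 ⟨hi, r.2, hij, hrun, htop, ?_⟩
  rw [Nat.odd_iff] at hodd
  rw [Nat.even_iff]
  omega

/-- The successor map injects `V \ evenTail V` into `evenTail V`, missing the bottoms of the odd
runs, which also lie in `evenTail V`. -/
theorem exists_sparse_subset_card_add_oddRuns (V : Finset ℕ) :
    ∃ S ⊆ V, Sparse S ∧ #V + #(oddRuns V) ≤ 2 * #S := by
  refine ⟨evenTail V, fun x hx => (mem_evenTail.1 hx).1, sparse_evenTail, ?_⟩
  have hbottoms : #((oddRuns V).image Prod.fst) = #(oddRuns V) := by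
    refine card_image_of_injOn fun r hr r' hr' h => ?_
    simp only [oddRuns, mem_coe, mem_filter, mem_product] at hr hr'
    exact Prod.ext h (eq_of_run_top (by omega) (by rw [h]; omega) hr.2.2.1 (h ▸ hr'.2.2.1)
      hr.2.2.2.2.1 hr'.2.2.2.2.1)
  have hdisj : Disjoint ((V \ evenTail V).image (· + 1)) ((oddRuns V).image Prod.fst) := by
    refine disjoint_left.2 fun y hy hy' => ?_
    obtain ⟨x, hx, rfl⟩ := mem_image.1 hy
    obtain ⟨r, hr, hr1⟩ := mem_image.1 hy'
    have hbot : r.1 - 1 ∉ V := by simp only [oddRuns, mem_filter] at hr; exact hr.2.2.2.1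
    exact hbot (by rw [hr1, Nat.add_sub_cancel]; exact (mem_sdiff.1 hx).1)
  have hsub : (V \ evenTail V).image (· + 1) ∪ (oddRuns V).image Prod.fst ⊆ evenTail V := by
    refine union_subset (fun y hy => ?_) (fun y hy => ?_)
    · obtain ⟨x, hx, rfl⟩ := mem_image.1 hy
      exact succ_mem_evenTail (mem_sdiff.1 hx).1 (mem_sdiff.1 hx).2
    · obtain ⟨r, hr, rfl⟩ := mem_image.1 hy
      exact fst_mem_evenTail hr
  have hcard := card_le_card hsub
  rw [card_union_of_disjoint hdisj, hbottoms,
    card_image_of_injective _ (add_left_injective 1)] at hcard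
  have := card_sdiff_add_card_eq_card (s := evenTail V) (t := V)
    (fun x hx => (mem_evenTail.1 hx).1)
  omega

end Runs

lemma exists_gap_bounds {m : ℕ} {W : Finset ℕ} (hfull : ¬ Icc 1 m ⊆ W) :
    ∃ h g, 1 ≤ h ∧ h ≤ g ∧ g ≤ m ∧ h ∉ W ∧ g ∉ W ∧ Icc 1 (h - 1) ⊆ W ∧ Icc (g + 1) m ⊆ W := by
  have hD : (Icc 1 m \ W).Nonempty := sdiff_nonempty.2 hfull
  obtain ⟨h, hhD, hhmin⟩ := (Icc 1 m \ W).exists_min_image (fun x => x) hD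
  obtain ⟨g, hgD, hgmax⟩ := (Icc 1 m \ W).exists_max_image (fun x => x) hD
  rw [mem_sdiff, mem_Icc] at hhD hgD
  refine ⟨h, g, hhD.1.1, hhmin g (mem_sdiff.2 ⟨mem_Icc.2 hgD.1, hgD.2⟩), hgD.1.2, hhD.2, hgD.2,
    fun x hx => ?_, fun x hx => ?_⟩ <;> rw [mem_Icc] at hx <;> by_contra hxW
  · have := hhmin x (mem_sdiff.2 ⟨mem_Icc.2 ⟨hx.1, by omega⟩, hxW⟩)
    omega
  · have := hgmax x (mem_sdiff.2 ⟨mem_Icc.2 ⟨by omega, hx.2⟩, hxW⟩)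
    omega

section Gaps

variable {m h g : ℕ} {W : Finset ℕ}

lemma card_eq_of_gaps (hW : W ⊆ Icc 1 m) (hhg : h ≤ g) (hgm : g ≤ m) (hh : h ∉ W) (hg : g ∉ W)
    (hlow : Icc 1 (h - 1) ⊆ W) (hhigh : Icc (g + 1) m ⊆ W) :
    #W = (h - 1) + #(W ∩ Ioo h g) + (m - g) := by
  have hsplit : W = Icc 1 (h - 1) ∪ ((W ∩ Ioo h g) ∪ Icc (g + 1) m) := by
    ext x
    simp only [mem_union, mem_inter, mem_Icc, mem_Ioo]
    constructor
    · intro hx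
      have := mem_Icc.1 (hW hx)
      have : x ≠ h := fun e => hh (e ▸ hx)
      have : x ≠ g := fun e => hg (e ▸ hx)
      by_cases hxh : x < h
      · left; omega
      by_cases hxg : x < g
      · exact Or.inr (Or.inl ⟨hx, by omega, hxg⟩)
      · right; right; omega
    · rintro (hx | ⟨hx, -⟩ | hx)
      · exact hlow (mem_Icc.2 hx)
      · exact hx
      · exact hhigh (mem_Icc.2 hx)
  conv_lhs => rw [hsplit]
  rw [card_union_of_add_two_le, card_union_of_add_two_le, Nat.card_Icc, Nat.card_Icc]
  · omega
  all_goals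
    intro x hx y hy
    simp only [mem_union, mem_inter, mem_Ioo, mem_Icc] at hx hy
    omega

/-- Every odd contiguous subset of `W` lies strictly between the gaps `h` and `g`, since `W`
contains everything outside `[h, g]`. -/
lemma oddContig_le_card_oddRuns (hlow : Icc 1 (h - 1) ⊆ W) (hhigh : Icc (g + 1) m ⊆ W) :
    oddContig m W ≤ #(oddRuns (W ∩ Ioo h g)) := by
  refine card_le_card fun r hr => ?_
  simp only [mem_filter, mem_product, mem_Icc] at hr
  obtain ⟨⟨⟨hi2, -⟩, -, hjm⟩, hij, hrun, hbot, htop, hodd⟩ := hr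
  have hhi : h < r.1 := by
    by_contra hc
    exact hbot (hlow (mem_Icc.2 ⟨by omega, by omega⟩))
  have hjg : r.2 < g := by
    by_contra hc
    exact htop (hhigh (mem_Icc.2 ⟨by omega, by omega⟩))
  have hrun' : Icc r.1 r.2 ⊆ W ∩ Ioo h g := fun x hx =>
    mem_inter.2 ⟨hrun hx, by rw [mem_Icc] at hx; rw [mem_Ioo]; omega⟩
  simp only [oddRuns, mem_filter, mem_product]
  exact ⟨⟨hrun' (mem_Icc.2 ⟨le_rfl, hij⟩), hrun' (mem_Icc.2 ⟨hij, le_rfl⟩)⟩, hij, hrun',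
    fun hc => hbot (mem_inter.1 hc).1, fun hc => htop (mem_inter.1 hc).1, hodd⟩

lemma exists_sparse_of_gaps {p q : ℕ} (hph : p ≤ h) (hhg : h ≤ g) (hgq : g ≤ q)
    (hlow : Icc (p + 1) (h - 1) ⊆ W) (hhigh : Icc (g + 1) (q - 1) ⊆ W) :
    ∃ S ⊆ W, Sparse S ∧ S ⊆ Icc (p + 1) (q - 1) ∧
      (h - p) / 2 + (#(W ∩ Ioo h g) + #(oddRuns (W ∩ Ioo h g)) + 1) / 2 + (q - g) / 2 ≤ #S := by
  obtain ⟨L, hL, hLsp, hLcard⟩ := exists_sparse_subset_Icc (p + 1) (h - 1)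
  obtain ⟨M, hM, hMsp, hMcard⟩ := exists_sparse_subset_card_add_oddRuns (W ∩ Ioo h g)
  obtain ⟨R, hR, hRsp, hRcard⟩ := exists_sparse_subset_Icc (g + 1) (q - 1)
  have hLb : ∀ x ∈ L, p + 1 ≤ x ∧ x ≤ h - 1 := fun x hx => mem_Icc.1 (hL hx)
  have hMb : ∀ x ∈ M, h < x ∧ x < g := fun x hx => mem_Ioo.1 (mem_inter.1 (hM hx)).2
  have hRb : ∀ x ∈ R, g + 1 ≤ x ∧ x ≤ q - 1 := fun x hx => mem_Icc.1 (hR hx)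
  have hsepMR : ∀ x ∈ M, ∀ y ∈ R, x + 2 ≤ y := fun x hx y hy => by
    have := hMb x hx; have := hRb y hy; omega
  have hsepL : ∀ x ∈ L, ∀ y ∈ M ∪ R, x + 2 ≤ y := fun x hx y hy => by
    have := hLb x hx
    rcases mem_union.1 hy with hy | hy
    · have := hMb y hy; omega
    · have := hRb y hy; omega
  refine ⟨L ∪ (M ∪ R), union_subset (hL.trans hlow) (union_subset
      (hM.trans inter_subset_left) (hR.trans hhigh)),
    hLsp.union_of_add_two_le (hMsp.union_of_add_two_le hRsp hsepMR) hsepL, fun x hx => ?_, ?_⟩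
  · rw [mem_Icc]
    rcases mem_union.1 hx with hx | hx
    · have := hLb x hx; omega
    rcases mem_union.1 hx with hx | hx
    · have := hMb x hx; omega
    · have := hRb x hx; omega
  · rw [card_union_of_add_two_le hsepL, card_union_of_add_two_le hsepMR]
    omega

end Gaps

theorem exists_sparse_subset_of_le_card_add_oddContig {m a : ℕ} {W : Finset ℕ} (hW : W ⊆ Icc 1 m)
    (hm : 2 * a + 1 ≤ m) (hbig : 2 * a ≤ #W + oddContig m W) :
    (∃ S ⊆ W, Sparse S ∧ S ⊆ Icc 2 (m - 1) ∧ a ≤ #S) ∨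
      (1 ∈ W ∧ m ∈ W ∧ ∃ S ⊆ W, Sparse S ∧ S ⊆ Icc 3 (m - 2) ∧ a - 1 ≤ #S) := by
  by_cases hfull : Icc 1 m ⊆ W
  · obtain ⟨S, hS, hsp, hcard⟩ := exists_sparse_subset_Icc 3 (m - 2)
    exact Or.inr ⟨hfull (mem_Icc.2 ⟨le_rfl, by omega⟩), hfull (mem_Icc.2 ⟨by omega, le_rfl⟩),
      S, hS.trans ((Icc_subset_Icc (by norm_num) (by omega)).trans hfull), hsp, hS, by omega⟩
  obtain ⟨h, g, h1, hhg, hgm, hh, hg, hlow, hhigh⟩ := exists_gap_bounds hfull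
  have hcard := card_eq_of_gaps hW hhg hgm hh hg hlow hhigh
  have hoc := oddContig_le_card_oddRuns hlow hhigh
  by_cases hends : (h - 1) % 2 = 1 ∧ (m - g) % 2 = 1
  · -- both end runs of `W` have odd length, so trimming them by one more point loses nothing
    obtain ⟨S, hSW, hsp, hSI, hS⟩ := exists_sparse_of_gaps (p := 2) (q := m - 1) (W := W)
      (by omega) hhg (by omega) ((Icc_subset_Icc (by omega) le_rfl).trans hlow)
      ((Icc_subset_Icc le_rfl (by omega)).trans hhigh)
    exact Or.inr ⟨hlow (mem_Icc.2 ⟨le_rfl, by omega⟩), hhigh (mem_Icc.2 ⟨by omega, le_rfl⟩),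
      S, hSW, hsp, hSI.trans (Icc_subset_Icc le_rfl (by omega)), by omega⟩
  · obtain ⟨S, hSW, hsp, hSI, hS⟩ := exists_sparse_of_gaps (p := 1) (q := m) (W := W)
      h1 hhg hgm ((Icc_subset_Icc (by omega) le_rfl).trans hlow)
      ((Icc_subset_Icc le_rfl (by omega)).trans hhigh)
    exact Or.inl ⟨S, hSW, hsp, hSI.trans (Icc_subset_Icc le_rfl (by omega)), by omega⟩

section GapSequences

variable {a : ℕ} {t : ℕ → ℕ}

lemma add_two_le_of_gaps (hgap : ∀ j, j + 1 < a → t j + 2 ≤ t (j + 1)) {i j : ℕ} (hij : i < j)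
    (hj : j < a) : t i + 2 ≤ t j := by
  induction j with
  | zero => omega
  | succ j ih =>
    rcases Nat.lt_succ_iff_lt_or_eq.1 hij with h | rfl
    · have := ih h (by omega)
      have := hgap j hj
      omega
    · exact hgap i hj

lemma injOn_of_gaps (hgap : ∀ j, j + 1 < a → t j + 2 ≤ t (j + 1)) : Set.InjOn t (range a) := by
  intro i hi j hj hij
  rw [coe_range, Set.mem_Iio] at hi hj
  by_contra hne
  rcases Nat.lt_or_gt_of_ne hne with h | h
  · have := add_two_le_of_gaps hgap h hj; omega
  · have := add_two_le_of_gaps hgap h hi; omega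

lemma sparse_image_of_gaps (hgap : ∀ j, j + 1 < a → t j + 2 ≤ t (j + 1)) :
    Sparse ((range a).image t) := by
  intro x hx hx1
  obtain ⟨i, hi, rfl⟩ := mem_image.1 hx
  obtain ⟨j, hj, hij⟩ := mem_image.1 hx1
  rw [mem_range] at hi hj
  rcases lt_trichotomy i j with h | rfl | h
  · have := add_two_le_of_gaps hgap h hj; omega
  · omega
  · have := add_two_le_of_gaps hgap h hi; omega

lemma image_subset_Icc_of_gaps (hgap : ∀ j, j + 1 < a → t j + 2 ≤ t (j + 1)) :
    (range a).image t ⊆ Icc (t 0) (t (a - 1)) := by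
  intro x hx
  obtain ⟨i, hi, rfl⟩ := mem_image.1 hx
  rw [mem_range] at hi
  rw [mem_Icc]
  constructor
  · rcases Nat.eq_zero_or_pos i with rfl | h
    · exact le_rfl
    · have := add_two_le_of_gaps hgap h hi; omega
  · rcases eq_or_lt_of_le (Nat.le_sub_one_of_lt hi) with h | h
    · rw [h]
    · have := add_two_le_of_gaps hgap h (by omega); omega

end GapSequences

lemma exists_gaps_of_sparse {S : Finset ℕ} (hS : Sparse S) :
    ∃ t : ℕ → ℕ, (∀ j, j + 1 < #S → t j + 2 ≤ t (j + 1)) ∧ (range #S).image t = S := by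
  set e := S.orderEmbOfFin rfl
  refine ⟨fun j => if h : j < #S then e ⟨j, h⟩ else 0, fun j hj => ?_, ?_⟩
  · simp only [dif_pos hj, dif_pos (Nat.lt_of_succ_lt hj)]
    have hlt : e ⟨j, Nat.lt_of_succ_lt hj⟩ < e ⟨j + 1, hj⟩ :=
      e.strictMono (Fin.mk_lt_mk.2 (Nat.lt_succ_self j))
    have hne : e ⟨j, Nat.lt_of_succ_lt hj⟩ + 1 ≠ e ⟨j + 1, hj⟩ :=
      fun h => hS _ (S.orderEmbOfFin_mem rfl _) (h ▸ S.orderEmbOfFin_mem rfl _)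
    omega
  · ext y
    simp only [mem_image, mem_range]
    constructor
    · rintro ⟨j, hj, rfl⟩
      rw [dif_pos hj]
      exact S.orderEmbOfFin_mem rfl _
    · intro hy
      obtain ⟨i, rfl⟩ : y ∈ Set.range e := by rw [range_orderEmbOfFin]; exact hy
      exact ⟨i, i.2, by rw [dif_pos i.2]⟩

theorem idealI_eq_span_sparse (k : Type*) [Field k] {n a p q : ℕ} (ha : 0 < a) :
    idealI k n a p q =
      Ideal.span ((fun S => ∏ x ∈ S, Xv k n x) '' {S | Sparse S ∧ #S = a ∧ S ⊆ Icc p q}) := by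
  unfold idealI
  congr 1
  ext f
  simp only [Set.mem_ofPred_eq, Set.mem_image]
  constructor
  · rintro ⟨t, hp, hq, hgap, rfl⟩
    refine ⟨(range a).image t, ⟨sparse_image_of_gaps hgap, ?_, ?_⟩, prod_image (injOn_of_gaps hgap)⟩
    · rw [card_image_of_injOn (injOn_of_gaps hgap), card_range]
    · exact (image_subset_Icc_of_gaps hgap).trans (Icc_subset_Icc hp hq)
  · rintro ⟨S, ⟨hS, rfl, hSI⟩, rfl⟩
    obtain ⟨t, hgap, himg⟩ := exists_gaps_of_sparse hS
    have ht : ∀ j < #S, t j ∈ Icc p q := fun j hj =>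
      hSI (himg ▸ mem_image_of_mem t (mem_range.2 hj))
    refine ⟨t, (mem_Icc.1 (ht 0 ha)).1, (mem_Icc.1 (ht _ (by omega))).2, hgap, ?_⟩
    conv_lhs => rw [← himg]
    exact prod_image (injOn_of_gaps hgap)

lemma prod_mem_idealI_of_sparse_subset (k : Type*) [Field k] {n a p q : ℕ} {S W : Finset ℕ}
    (hSW : S ⊆ W) (hS : Sparse S) (hSI : S ⊆ Icc p q) (ha : 0 < a) (hcard : a ≤ #S) :
    ∏ x ∈ W, Xv k n x ∈ idealI k n a p q := by
  obtain ⟨T, hTS, hTcard⟩ := exists_subset_card_eq hcard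
  rw [← prod_sdiff (hTS.trans hSW), idealI_eq_span_sparse k ha]
  exact Ideal.mul_mem_left _ _
    (Ideal.subset_span ⟨T, ⟨hS.mono hTS, hTcard, hTS.trans hSI⟩, rfl⟩)

lemma prod_mem_span_mul_idealI_of_sparse_subset (k : Type*) [Field k] {m a p q : ℕ}
    {S W : Finset ℕ} (h1 : 1 ∈ W) (hmW : m ∈ W) (hSW : S ⊆ W) (hS : Sparse S)
    (hSI : S ⊆ Icc p q) (hp : 1 < p) (hq : q < m) (ha : 0 < a) (hcard : a ≤ #S) :
    ∏ x ∈ W, Xv k m x ∈ Ideal.span {Xv k m 1 * Xv k m m} * idealI k m a p q := by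
  have hSW' : S ⊆ W \ {1, m} := fun x hx => by
    have := mem_Icc.1 (hSI hx)
    simp only [mem_sdiff, mem_insert, mem_singleton]
    exact ⟨hSW hx, by omega⟩
  obtain ⟨x, hx⟩ := card_pos.1 (ha.trans_le hcard)
  have := mem_Icc.1 (hSI hx)
  rw [← prod_sdiff (insert_subset h1 (singleton_subset_iff.2 hmW)), prod_pair (by omega),
    mul_comm (∏ x ∈ W \ {1, m}, Xv k m x)]
  exact Ideal.mul_mem_mul (Ideal.mem_span_singleton_self _)
    (prod_mem_idealI_of_sparse_subset k hSW' hS hSI ha hcard)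

lemma card_le_oddContig {m : ℕ} {T W : Finset ℕ} (hTW : T ⊆ W) (hT : T ⊆ Icc 2 (m - 1))
    (hiso : ∀ x ∈ T, x - 1 ∉ W ∧ x + 1 ∉ W) : #T ≤ oddContig m W := by
  refine card_le_card_of_injOn (fun x => (x, x)) (fun x hx => ?_)
    (fun x _ y _ h => congrArg Prod.fst h)
  have hx2 := mem_Icc.1 (hT hx)
  simp only [coe_filter, Set.mem_ofPred_eq, mem_product, mem_Icc, Icc_self, singleton_subset_iff,
    Nat.sub_self, zero_add]
  exact ⟨⟨hx2, hx2⟩, le_rfl, hTW hx, (hiso x hx).1, (hiso x hx).2, odd_one⟩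

lemma prod_mem_SRideal (k : Type*) [Field k] {d m : ℕ} {W : Finset ℕ} (hW : W ⊆ Icc 1 m)
    (hbig : d < #W + oddContig m W) : ∏ x ∈ W, Xv k m x ∈ SRideal k d m :=
  Ideal.subset_span ⟨W, hW, fun ⟨_, hcard, hoc⟩ => by omega, rfl⟩

variable (k : Type*) [Field k] {d m : ℕ} {T : Finset ℕ}

lemma prod_mem_SRideal_of_sparse (hT : Sparse T) (hTI : T ⊆ Icc 2 (m - 1)) (hd : d < 2 * #T) :
    ∏ x ∈ T, Xv k m x ∈ SRideal k d m := by
  refine prod_mem_SRideal k (hTI.trans (Icc_subset_Icc (by norm_num) (Nat.sub_le m 1))) ?_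
  have hiso : ∀ x ∈ T, x - 1 ∉ T ∧ x + 1 ∉ T := fun x hx =>
    ⟨fun h => hT _ h (by rwa [Nat.sub_add_cancel (by have := mem_Icc.1 (hTI hx); omega)]),
      hT x hx⟩
  have := card_le_oddContig (m := m) subset_rfl hTI hiso
  omega

lemma mul_prod_mem_SRideal_of_sparse (hm : 1 < m) (hT : Sparse T) (hTI : T ⊆ Icc 3 (m - 2))
    (hd : d < 2 * #T + 2) : Xv k m 1 * Xv k m m * ∏ x ∈ T, Xv k m x ∈ SRideal k d m := by
  have hTb : ∀ x ∈ T, 3 ≤ x ∧ x ≤ m - 2 := fun x hx => mem_Icc.1 (hTI hx)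
  have hmT : m ∉ T := fun h => by have := hTb m h; omega
  have h1T : 1 ∉ insert m T := by
    rw [mem_insert]
    rintro (h | h)
    · omega
    · have := hTb 1 h; omega
  have hiso : ∀ x ∈ T, x - 1 ∉ insert 1 (insert m T) ∧ x + 1 ∉ insert 1 (insert m T) := by
    intro x hx
    have := hTb x hx
    simp only [mem_insert, not_or]
    refine ⟨⟨by omega, by omega, fun h => hT _ h ?_⟩, by omega, by omega, hT x hx⟩
    rwa [Nat.sub_add_cancel (by omega)]
  rw [mul_assoc, ← prod_insert hmT, ← prod_insert h1T]
  refine prod_mem_SRideal k (fun x hx => ?_) ?_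
  · simp only [mem_insert] at hx
    rcases hx with rfl | rfl | hx
    · exact mem_Icc.2 ⟨le_rfl, hm.le⟩
    · exact mem_Icc.2 ⟨hm.le, le_rfl⟩
    · have := hTb x hx; exact mem_Icc.2 ⟨by omega, by omega⟩
  · have := card_le_oddContig (m := m) ((subset_insert m T).trans (subset_insert 1 _))
      (hTI.trans (Icc_subset_Icc (by norm_num) (by omega))) hiso
    rw [card_insert_of_notMem h1T, card_insert_of_notMem hmT]
    omega

end CyclicPolytope

open CyclicPolytope

/-- For `d` odd with `d ≥ 3`, `d + 1 < m` and `a = (d+1)/2`, the Stanley–Reisner ideal of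
`Δ(d,m)` equals `I_{a,2,m−1} + x_1x_m·I_{a−1,3,m−2}`. -/
theorem stanleyReisner_cyclic_odd (k : Type*) [Field k] (d m : ℕ)
    (hd : Odd d) (hd3 : 3 ≤ d) (hm : d + 1 < m) (a : ℕ) (ha : a = (d + 1) / 2) :
    SRideal k d m = idealI k m a 2 (m - 1) +
      Ideal.span {Xv k m 1 * Xv k m m} * idealI k m (a - 1) 3 (m - 2) := by
  obtain ⟨b, rfl⟩ := hd
  have h2a : 2 * a = 2 * b + 2 := by omega
  rw [Submodule.add_eq_sup]
  apply le_antisymm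
  · refine Ideal.span_le.2 ?_
    rintro _ ⟨W, hW, hnf, rfl⟩
    have hbig : 2 * a ≤ #W + oddContig m W := by
      by_contra! h
      exact hnf ⟨hW, by omega, by omega⟩
    rcases exists_sparse_subset_of_le_card_add_oddContig hW (by omega) hbig with
      ⟨S, hSW, hS, hSI, hcard⟩ | ⟨h1, hmW, S, hSW, hS, hSI, hcard⟩
    · exact Ideal.mem_sup_left
        (prod_mem_idealI_of_sparse_subset k hSW hS hSI (by omega) hcard)
    · exact Ideal.mem_sup_right (prod_mem_span_mul_idealI_of_sparse_subset k h1 hmW hSW hS hSI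
        (by norm_num) (by omega) (by omega) hcard)
  · rw [idealI_eq_span_sparse k (by omega), idealI_eq_span_sparse k (by omega),
      Ideal.span_mul_span', sup_le_iff, Ideal.span_le, Ideal.span_le]
    constructor
    · rintro _ ⟨T, ⟨hT, hcard, hTI⟩, rfl⟩
      exact prod_mem_SRideal_of_sparse k hT hTI (by omega)
    · rintro _ ⟨_, rfl, _, ⟨T, ⟨hT, hcard, hTI⟩, rfl⟩, rfl⟩
      exact mul_prod_mem_SRideal_of_sparse k (by omega) hT hTI (by omega)
end

section
/- Let d ≥ 3 be an odd integer and m an integer with d+1 < m. Then for every integer i with 1 ≤ i ≤ m−d, η(d, m+1, i) = η(d, m, i) + η(d, m, i−1) + η(d−2, m−1, i). -/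
/-- `η(e,n,j) = C(n−⌊e/2⌋−2, ⌊e/2⌋+j)·C(⌊e/2⌋+j−1, ⌊e/2⌋)` for `1 ≤ j ≤ n−e−1`, and
`η(e,n,j) = 0` for `j = 0` or `j ≥ n−e`. -/
def eta (e n j : ℕ) : ℕ :=
  if 1 ≤ j ∧ j ≤ n - e - 1 then
    Nat.choose (n - e / 2 - 2) (e / 2 + j) * Nat.choose (e / 2 + j - 1) (e / 2)
  else 0

lemma eta_pos (e n j : ℕ) (h1 : 1 ≤ j) (h2 : j ≤ n - e - 1) :
    eta e n j = Nat.choose (n - e / 2 - 2) (e / 2 + j) * Nat.choose (e / 2 + j - 1) (e / 2) := by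
  simp [eta, h1, h2]

lemma eta_zero (e n j : ℕ) (h : ¬ (1 ≤ j ∧ j ≤ n - e - 1)) : eta e n j = 0 := by
  simp [eta, h]

lemma key (c t s : ℕ) (hst : s ≤ t + 1) :
    Nat.choose (c + t + 3) (c + s + 2) * Nat.choose (c + s + 1) (c + 1)
    = (if s ≤ t then Nat.choose (c + t + 2) (c + s + 2) * Nat.choose (c + s + 1) (c + 1) else 0)
      + (if 1 ≤ s then Nat.choose (c + t + 2) (c + s + 1) * Nat.choose (c + s) (c + 1) else 0)
      + Nat.choose (c + t + 2) (c + s + 1) * Nat.choose (c + s) c := by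
  rcases Nat.lt_or_ge t s with h | h
  · have hs : s = t + 1 := by omega
    subst hs
    rw [if_neg (by omega), if_pos (by omega)]
    simp only [show c + (t + 1) + 2 = c + t + 3 from by omega,
      show c + (t + 1) + 1 = c + t + 2 from by omega,
      show c + (t + 1) = c + t + 1 from by omega,
      show c + t + 1 + 1 = c + t + 2 from by omega,
      show c + t + 1 + 2 = c + t + 3 from by omega,
      Nat.choose_self, one_mul, mul_one, zero_add]
    have q : Nat.choose (c + t + 2) (c + 1)
        = Nat.choose (c + t + 1) c + Nat.choose (c + t + 1) (c + 1) := by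
      have := Nat.choose_succ_succ (c + t + 1) c
      simp only [Nat.succ_eq_add_one, show c + t + 1 + 1 = c + t + 2 from by omega] at this
      exact this
    omega
  · rw [if_pos h]
    rcases Nat.eq_zero_or_pos s with hs | hs
    · subst hs
      rw [if_neg (by omega)]
      simp only [show c + 0 + 2 = c + 2 from by omega,
        show c + 0 + 1 = c + 1 from by omega, Nat.add_zero,
        Nat.choose_self, mul_one]
      have p1 : Nat.choose (c + t + 3) (c + 2)
          = Nat.choose (c + t + 2) (c + 1) + Nat.choose (c + t + 2) (c + 2) := by
        have := Nat.choose_succ_succ (c + t + 2) (c + 1)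
        simp only [Nat.succ_eq_add_one, show c + t + 2 + 1 = c + t + 3 from by omega,
          show c + 1 + 1 = c + 2 from by omega] at this
        exact this
      omega
    · have p1 : Nat.choose (c + t + 3) (c + s + 2)
          = Nat.choose (c + t + 2) (c + s + 1) + Nat.choose (c + t + 2) (c + s + 2) := by
        have := Nat.choose_succ_succ (c + t + 2) (c + s + 1)
        simp only [Nat.succ_eq_add_one, show c + t + 2 + 1 = c + t + 3 from by omega,
          show c + s + 1 + 1 = c + s + 2 from by omega] at this
        exact this
      have p2 : Nat.choose (c + s + 1) (c + 1)
          = Nat.choose (c + s) c + Nat.choose (c + s) (c + 1) := by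
        have := Nat.choose_succ_succ (c + s) c
        simp only [Nat.succ_eq_add_one, show c + s + 1 = c + s + 1 from rfl] at this
        exact this
      rw [if_pos (show 1 ≤ s from hs), p1, p2]
      ring

/-- For `d ≥ 3` odd, `d + 1 < m` and `1 ≤ i ≤ m − d`:
`η(d, m+1, i) = η(d, m, i) + η(d, m, i−1) + η(d−2, m−1, i)`. -/
theorem eta_recurrence (d m : ℕ) (hd : Odd d) (hd3 : 3 ≤ d) (hm : d + 1 < m)
    (i : ℕ) (hi1 : 1 ≤ i) (hi2 : i ≤ m - d) :
    eta d (m + 1) i = eta d m i + eta d m (i - 1) + eta (d - 2) (m - 1) i := by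
  obtain ⟨k, hk⟩ := hd
  obtain ⟨c, hc⟩ : ∃ c, d = 2 * c + 3 := ⟨k - 1, by omega⟩
  clear hk
  obtain ⟨t, htm⟩ : ∃ t, m = 2 * c + 5 + t := ⟨m - (2 * c + 5), by omega⟩
  obtain ⟨s, his⟩ : ∃ s, i = s + 1 := ⟨i - 1, by omega⟩
  have hst : s ≤ t + 1 := by omega
  subst hc htm his
  have ed : (2 * c + 3) / 2 = c + 1 := by omega
  have ed2 : (2 * c + 3 - 2) / 2 = c := by omega
  -- LHS
  have L : eta (2 * c + 3) (2 * c + 5 + t + 1) (s + 1)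
      = Nat.choose (c + t + 3) (c + s + 2) * Nat.choose (c + s + 1) (c + 1) := by
    rw [eta_pos _ _ _ (by omega) (by omega), ed]
    congr 1 <;> congr 1 <;> omega
  -- third term
  have R3 : eta (2 * c + 3 - 2) (2 * c + 5 + t - 1) (s + 1)
      = Nat.choose (c + t + 2) (c + s + 1) * Nat.choose (c + s) c := by
    rw [eta_pos _ _ _ (by omega) (by omega), ed2]
    congr 1 <;> congr 1 <;> omega
  -- first term
  have R1 : eta (2 * c + 3) (2 * c + 5 + t) (s + 1)
      = if s ≤ t then Nat.choose (c + t + 2) (c + s + 2) * Nat.choose (c + s + 1) (c + 1)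
        else 0 := by
    rcases le_or_gt s t with h | h
    · rw [if_pos h, eta_pos _ _ _ (by omega) (by omega), ed]
      congr 1 <;> congr 1 <;> omega
    · rw [if_neg (by omega), eta_zero _ _ _ (by omega)]
  -- second term
  have R2 : eta (2 * c + 3) (2 * c + 5 + t) (s + 1 - 1)
      = if 1 ≤ s then Nat.choose (c + t + 2) (c + s + 1) * Nat.choose (c + s) (c + 1)
        else 0 := by
    rcases Nat.lt_or_ge 0 s with h | h
    · rw [if_pos (show 1 ≤ s from h), eta_pos _ _ _ (by omega) (by omega), ed]
      congr 1 <;> congr 1 <;> omega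
    · rw [if_neg (by omega), eta_zero _ _ _ (by omega)]
  rw [L, R1, R2, R3]
  exact key c t s hst
end

section
/- Let k be a field, d an even integer with d ≥ 2, and m an integer with d+1 < m; set a = (d+2)/2. In k[x_1,…,x_m] the colon ideal (I_{a,1,m−1} + I_{a,2,m}) : (x_1x_m) equals I_{a−1,2,m−2} + I_{a−1,3,m−1}. -/
namespace ColonAux

open MvPolynomial Finset

/-- Admissibility of a (0-indexed) index function `u : ℕ → Fin m` for the
generators of `I_{a,p,q}` (1-indexed variables `x_{u j + 1}`). -/
def adm (m a p q : ℕ) (u : ℕ → Fin m) : Prop :=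
  p ≤ (u 0 : ℕ) + 1 ∧ (u (a - 1) : ℕ) + 1 ≤ q ∧
    ∀ j, j + 1 < a → (u j : ℕ) + 2 ≤ (u (j + 1) : ℕ)

/-- Exponent vectors of the generators of `I_{a,p,q}`. -/
def S (m a p q : ℕ) : Set (Fin m →₀ ℕ) :=
  { s | ∃ u : ℕ → Fin m, adm m a p q u ∧
      s = ∑ j ∈ Finset.range a, Finsupp.single (u j) 1 }

theorem chainN {a : ℕ} {v : ℕ → ℕ} (h : ∀ j, j + 1 < a → v j + 2 ≤ v (j + 1)) :
    ∀ i j, i ≤ j → j < a → v i + 2 * (j - i) ≤ v j := by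
  intro i j hij hja
  induction j with
  | zero =>
    have : i = 0 := Nat.le_zero.mp hij
    subst this; simp
  | succ n ih =>
    by_cases h' : i = n + 1
    · subst h'; simp
    · have h1 : i ≤ n := by omega
      have h2 := ih h1 (by omega)
      have h3 := h n hja
      omega

theorem chainF {m a : ℕ} {u : ℕ → Fin m}
    (hg : ∀ j, j + 1 < a → (u j : ℕ) + 2 ≤ (u (j + 1) : ℕ)) :
    ∀ i j, i ≤ j → j < a → (u i : ℕ) + 2 * (j - i) ≤ (u j : ℕ) :=
  chainN (v := fun j => (u j : ℕ)) hg

theorem inj_of_gap {m a : ℕ} {u : ℕ → Fin m}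
    (hg : ∀ j, j + 1 < a → (u j : ℕ) + 2 ≤ (u (j + 1) : ℕ)) :
    ∀ i j, i < a → j < a → u i = u j → i = j := by
  intro i j hi hj he
  rcases lt_trichotomy i j with h | h | h
  · have := chainF hg i j h.le hj
    have hv : (u i : ℕ) = (u j : ℕ) := by rw [he]
    omega
  · exact h
  · have := chainF hg j i h.le hi
    have hv : (u i : ℕ) = (u j : ℕ) := by rw [he]
    omega

theorem prod_X_eq {k : Type*} [Field k] (m n : ℕ) (u : ℕ → Fin m) :
    (∏ j ∈ Finset.range n, (X (u j) : MvPolynomial (Fin m) k)) =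
      MvPolynomial.monomial (∑ j ∈ Finset.range n, Finsupp.single (u j) 1) (1 : k) := by
  induction n with
  | zero => simp [MvPolynomial.monomial_zero']
  | succ n ih =>
    rw [Finset.prod_range_succ, Finset.sum_range_succ, ih, X, monomial_mul, one_mul]

theorem sum_single_le_iff {m a : ℕ} {u : ℕ → Fin m}
    (hinj : ∀ i j, i < a → j < a → u i = u j → i = j) (ξ : Fin m →₀ ℕ) :
    (∑ j ∈ Finset.range a, Finsupp.single (u j) 1) ≤ ξ ↔
      ∀ j, j < a → 1 ≤ ξ (u j) := by
  have hval : ∀ c, (∑ j ∈ Finset.range a, Finsupp.single (u j) 1) c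
      = ∑ j ∈ Finset.range a, if u j = c then 1 else 0 := by
    intro c
    rw [Finsupp.finset_sum_apply]
    exact Finset.sum_congr rfl fun j _ => Finsupp.single_apply
  rw [Finsupp.le_def]
  constructor
  · intro h j hj
    calc (1 : ℕ) = if u j = u j then 1 else 0 := by simp
      _ ≤ ∑ j' ∈ Finset.range a, if u j' = u j then 1 else 0 :=
          Finset.single_le_sum (f := fun j' => if u j' = u j then 1 else 0)
            (fun i _ => Nat.zero_le _) (Finset.mem_range.mpr hj)
      _ = (∑ j' ∈ Finset.range a, Finsupp.single (u j') 1) (u j) := (hval (u j)).symm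
      _ ≤ ξ (u j) := h (u j)
  · intro h c
    rw [hval]
    by_cases hc : ∃ j, j < a ∧ u j = c
    · obtain ⟨j0, hj0, rfl⟩ := hc
      have hcongr : ∀ j' ∈ Finset.range a,
          (if u j' = u j0 then 1 else 0) = if j' = j0 then 1 else 0 := by
        intro j' hj'
        by_cases h' : u j' = u j0
        · rw [if_pos h', if_pos (hinj _ _ (Finset.mem_range.mp hj') hj0 h')]
        · rw [if_neg h', if_neg]
          rintro rfl; exact h' rfl
      rw [Finset.sum_congr rfl hcongr, Finset.sum_ite_eq' (Finset.range a) j0 (fun _ => 1),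
        if_pos (Finset.mem_range.mpr hj0)]
      exact h j0 hj0
    · push_neg at hc
      have hz : ∀ j' ∈ Finset.range a, (if u j' = c then 1 else 0) = 0 :=
        fun j' hj' => if_neg (hc j' (Finset.mem_range.mp hj'))
      rw [Finset.sum_congr rfl hz]
      simp

theorem idealI_eq (k : Type*) [Field k] (m a p q : ℕ)
    (ha : 1 ≤ a) (hp : 1 ≤ p) (hq : q ≤ m) :
    idealI k m a p q =
      Ideal.span ((fun s => MvPolynomial.monomial s (1 : k)) '' S m a p q) := by
  unfold idealI
  congr 1
  ext f
  constructor
  · rintro ⟨t, h0, hend, hgap, rfl⟩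
    have hch := chainN hgap
    have hbd : ∀ j, j < a → 1 ≤ t j ∧ t j ≤ m := by
      intro j hj
      have h1 := hch 0 j (Nat.zero_le _) hj
      have h2 := hch j (a - 1) (by omega) (by omega)
      omega
    have hm0 : 0 < m := by
      have := hbd 0 (by omega); omega
    set u : ℕ → Fin m := fun j => ⟨(t j - 1) % m, Nat.mod_lt _ hm0⟩ with hu
    have hval : ∀ j, j < a → ((u j : ℕ)) = t j - 1 := by
      intro j hj
      have := hbd j hj
      exact Nat.mod_eq_of_lt (by omega)
    refine ⟨_, ⟨u, ⟨?_, ?_, ?_⟩, rfl⟩, ?_⟩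
    · rw [hval 0 (by omega)]; have := hbd 0 (by omega); omega
    · rw [hval (a - 1) (by omega)]; have := hbd (a - 1) (by omega); omega
    · intro j hj
      rw [hval j (by omega), hval (j + 1) hj]
      have h1 := hbd j (by omega)
      have := hgap j hj
      omega
    · beta_reduce
      rw [← prod_X_eq]
      refine (Finset.prod_congr rfl fun j hj => ?_).symm
      have hj' := Finset.mem_range.mp hj
      simp only [Xv]
      rw [dif_pos ⟨(hbd j hj').1, (hbd j hj').2⟩]
      exact congrArg X (Fin.ext (hval j hj')).symm
  · rintro ⟨s, ⟨u, ⟨h0, hend, hgap⟩, rfl⟩, rfl⟩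
    refine ⟨fun j => (u j : ℕ) + 1, by exact h0, by exact hend,
      fun j hj => by
        show (u j : ℕ) + 1 + 2 ≤ (u (j + 1) : ℕ) + 1
        have := hgap j hj; omega, ?_⟩
    beta_reduce
    rw [← prod_X_eq]
    refine Finset.prod_congr rfl fun j hj => ?_
    show (X (u j) : MvPolynomial (Fin m) k) = Xv k m ((u j : ℕ) + 1)
    simp only [Xv]
    rw [dif_pos ⟨by omega, by have := (u j).isLt; omega⟩]
    refine congrArg X (Fin.ext ?_)
    simp

theorem key {m a : ℕ} (ha2 : 2 ≤ a) (hm4 : 4 ≤ m) (ξ : Fin m →₀ ℕ)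
    (i1 im : Fin m) (h1 : (i1 : ℕ) = 0) (him : (im : ℕ) = m - 1) :
    (∃ s ∈ S m a 1 (m - 1) ∪ S m a 2 m,
        s ≤ ξ + (Finsupp.single i1 1 + Finsupp.single im 1)) ↔
      ∃ s ∈ S m (a - 1) 2 (m - 2) ∪ S m (a - 1) 3 (m - 1), s ≤ ξ := by
  set e : Fin m →₀ ℕ := Finsupp.single i1 1 + Finsupp.single im 1 with hedef
  have he0 : ∀ c : Fin m, (c : ℕ) ≠ 0 → (c : ℕ) ≠ m - 1 → (ξ + e) c = ξ c := by
    intro c hc1 hc2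
    have hn1 : i1 ≠ c := fun h => hc1 (by rw [← h]; exact h1)
    have hn2 : im ≠ c := fun h => hc2 (by rw [← h]; exact him)
    rw [Finsupp.add_apply, hedef, Finsupp.add_apply, Finsupp.single_apply,
      Finsupp.single_apply, if_neg hn1, if_neg hn2]
    omega
  constructor
  · rintro ⟨s, hs | hs, hle⟩
    · -- s ∈ S m a 1 (m-1)
      obtain ⟨u, ⟨hu0, huend, hg⟩, rfl⟩ := hs
      have hch := chainF hg
      have hinj := inj_of_gap hg
      have hper := (sum_single_le_iff hinj _).mp hle
      by_cases hc : (u 0 : ℕ) = 0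
      · refine ⟨_, Or.inr ⟨fun j => u (j + 1), ⟨?_, ?_, ?_⟩, rfl⟩, ?_⟩
        · show 3 ≤ (u 1 : ℕ) + 1
          have := hch 0 1 (by omega) (by omega)
          omega
        · show (u ((a - 1 - 1) + 1) : ℕ) + 1 ≤ m - 1
          have he : a - 1 - 1 + 1 = a - 1 := by omega
          rw [he]; exact huend
        · intro j hj
          exact hg (j + 1) (by omega)
        · rw [sum_single_le_iff (fun i j hi hj hij => by
            have := hinj (i + 1) (j + 1) (by omega) (by omega) hij
            omega)]
          intro j hj
          have hne1 : ((u (j + 1) : ℕ)) ≠ 0 := by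
            have := hch 0 (j + 1) (by omega) (by omega)
            omega
          have hne2 : ((u (j + 1) : ℕ)) ≠ m - 1 := by
            have := hch (j + 1) (a - 1) (by omega) (by omega)
            omega
          have := hper (j + 1) (by omega)
          rwa [he0 _ hne1 hne2] at this
      · refine ⟨_, Or.inl ⟨u, ⟨by omega, ?_, ?_⟩, rfl⟩, ?_⟩
        · have := hch (a - 1 - 1) (a - 1) (by omega) (by omega)
          omega
        · intro j hj
          exact hg j (by omega)
        · rw [sum_single_le_iff (fun i j hi hj hij =>
            hinj i j (by omega) (by omega) hij)]
          intro j hj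
          have hA := hch 0 j (by omega) (by omega)
          have hB := hch j (a - 1) (by omega) (by omega)
          have := hper j (by omega)
          rwa [he0 _ (by omega) (by omega)] at this
    · -- s ∈ S m a 2 m
      obtain ⟨u, ⟨hu0, huend, hg⟩, rfl⟩ := hs
      have hch := chainF hg
      have hinj := inj_of_gap hg
      have hper := (sum_single_le_iff hinj _).mp hle
      have hlt : (u (a - 1) : ℕ) < m := (u (a - 1)).isLt
      refine ⟨_, Or.inl ⟨u, ⟨by omega, ?_, ?_⟩, rfl⟩, ?_⟩
      · have := hch (a - 1 - 1) (a - 1) (by omega) (by omega)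
        omega
      · intro j hj
        exact hg j (by omega)
      · rw [sum_single_le_iff (fun i j hi hj hij =>
          hinj i j (by omega) (by omega) hij)]
        intro j hj
        have hA := hch 0 j (by omega) (by omega)
        have hB := hch j (a - 1) (by omega) (by omega)
        have := hper j (by omega)
        rwa [he0 _ (by omega) (by omega)] at this
  · rintro ⟨s, hs | hs, hle⟩
    · -- s ∈ S m (a-1) 2 (m-2); append x_m : land in S m a 2 m
      obtain ⟨u, ⟨hu0, huend, hg⟩, rfl⟩ := hs
      refine ⟨_, Or.inr ⟨Function.update u (a - 1) im, ⟨?_, ?_, ?_⟩, rfl⟩, ?_⟩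
      · rw [Function.update_of_ne (by omega : (0 : ℕ) ≠ a - 1)]
        exact hu0
      · rw [Function.update_self]
        omega
      · intro j hj
        by_cases h' : j + 1 = a - 1
        · have hj' : j = a - 1 - 1 := by omega
          subst hj'
          rw [Function.update_of_ne (by omega), h', Function.update_self, him]
          omega
        · rw [Function.update_of_ne (by omega), Function.update_of_ne (by omega)]
          exact hg j (by omega)
      · have hsum : (∑ j ∈ Finset.range a, Finsupp.single (Function.update u (a - 1) im j) 1)
            = Finsupp.single im 1 + (∑ j ∈ Finset.range (a - 1), Finsupp.single (u j) 1) := by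
          have hran : Finset.range a = insert (a - 1) (Finset.range (a - 1)) := by
            rw [← Finset.range_add_one]
            congr 1
            omega
          rw [hran, Finset.sum_insert (by simp), Function.update_self]
          congr 1
          exact Finset.sum_congr rfl fun j hj => by
            rw [Function.update_of_ne (by have := Finset.mem_range.mp hj; omega)]
        rw [hsum, hedef]
        calc Finsupp.single im 1 + (∑ j ∈ Finset.range (a - 1), Finsupp.single (u j) 1)
            ≤ (Finsupp.single i1 1 + Finsupp.single im 1) + ξ := add_le_add le_add_self hle
          _ = ξ + (Finsupp.single i1 1 + Finsupp.single im 1) := add_comm _ _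
    · -- s ∈ S m (a-1) 3 (m-1); prepend x_1 : land in S m a 1 (m-1)
      obtain ⟨u, ⟨hu0, huend, hg⟩, rfl⟩ := hs
      have huend' : (u (a - 2) : ℕ) + 1 ≤ m - 1 := by
        have h' : a - 1 - 1 = a - 2 := by omega
        rwa [h'] at huend
      refine ⟨_, Or.inl ⟨fun j => Nat.casesOn j i1 u, ⟨?_, ?_, ?_⟩, rfl⟩, ?_⟩
      · show 1 ≤ (i1 : ℕ) + 1
        omega
      · show ((Nat.casesOn (a - 1) i1 u : Fin m) : ℕ) + 1 ≤ m - 1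
        have h' : a - 1 = (a - 2) + 1 := by omega
        rw [h']
        exact huend'
      · intro j hj
        cases j with
        | zero =>
          show (i1 : ℕ) + 2 ≤ (u 0 : ℕ)
          omega
        | succ n =>
          show (u n : ℕ) + 2 ≤ (u (n + 1) : ℕ)
          exact hg n (by omega)
      · have hsum : (∑ j ∈ Finset.range a,
            Finsupp.single ((fun j => (Nat.casesOn j i1 u : Fin m)) j) 1)
            = (∑ j ∈ Finset.range (a - 1), Finsupp.single (u j) 1) + Finsupp.single i1 1 := by
          conv_lhs => rw [show a = (a - 1) + 1 by omega]
          rw [Finset.sum_range_succ']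
          rfl
        rw [hsum, hedef]
        exact add_le_add hle le_self_add

end ColonAux

/-- For `d ≥ 2` even, `d + 1 < m`, `a = (d+2)/2`: in `k[x_1,…,x_m]` the colon ideal
`(I_{a,1,m−1} + I_{a,2,m}) : (x_1x_m)` equals `I_{a−1,2,m−2} + I_{a−1,3,m−1}`. -/
theorem colon_ideal_cyclic_even (k : Type*) [Field k] (d m : ℕ)
    (hd : Even d) (hd2 : 2 ≤ d) (hm : d + 1 < m) (a : ℕ) (ha : a = (d + 2) / 2) :
    (idealI k m a 1 (m - 1) + idealI k m a 2 m).colon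
        (Ideal.span {Xv k m 1 * Xv k m m}) =
      idealI k m (a - 1) 2 (m - 2) + idealI k m (a - 1) 3 (m - 1) := by
  classical
  open MvPolynomial ColonAux in
  have ha2 : 2 ≤ a := by omega
  have hm4 : 4 ≤ m := by omega
  have hm0 : 0 < m := by omega
  set i1 : Fin m := ⟨0, hm0⟩ with hi1
  set im : Fin m := ⟨m - 1, by omega⟩ with him
  have hx : Xv k m 1 * Xv k m m =
      MvPolynomial.monomial (Finsupp.single i1 1 + Finsupp.single im 1) (1 : k) := by
    simp only [Xv]
    rw [dif_pos ⟨le_refl 1, by omega⟩, dif_pos ⟨by omega, le_refl m⟩, X, X,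
      monomial_mul, one_mul]
  rw [idealI_eq k m a 1 (m - 1) (by omega) le_rfl (by omega),
    idealI_eq k m a 2 m (by omega) (by omega) le_rfl,
    idealI_eq k m (a - 1) 2 (m - 2) (by omega) (by omega) (by omega),
    idealI_eq k m (a - 1) 3 (m - 1) (by omega) (by omega) (by omega),
    Ideal.add_eq_sup, Ideal.add_eq_sup,
    ← Ideal.span_union, ← Ideal.span_union, ← Set.image_union, ← Set.image_union]
  ext f
  rw [Ideal.mem_colon_span_singleton, hx, mem_ideal_span_monomial_image,
    mem_ideal_span_monomial_image]
  constructor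
  · intro h ξ hξ
    have hξ' : ξ + (Finsupp.single i1 1 + Finsupp.single im 1) ∈
        (f * MvPolynomial.monomial (Finsupp.single i1 1 + Finsupp.single im 1) (1 : k)).support := by
      rw [MvPolynomial.mem_support_iff, MvPolynomial.coeff_mul_monomial, mul_one]
      exact MvPolynomial.mem_support_iff.mp hξ
    obtain ⟨s, hs, hle⟩ := h _ hξ'
    exact (key ha2 hm4 ξ i1 im rfl rfl).mp ⟨s, hs, hle⟩
  · intro h η hη
    have hη' := MvPolynomial.support_mul _ _ hη
    rw [Finset.mem_add] at hη'
    obtain ⟨ξ, hξ, ε, hε, rfl⟩ := hη'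
    rw [MvPolynomial.support_monomial, if_neg (one_ne_zero)] at hε
    rw [Finset.mem_singleton] at hε
    subst hε
    obtain ⟨s, hs, hle⟩ := (key ha2 hm4 ξ i1 im rfl rfl).mpr (h ξ hξ)
    exact ⟨s, hs, hle⟩
end
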